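/- arXiv:math/9302210 — 6 statements merged into one kernel-verified Lean document; each statement's English description precedes it below -/
import Mathlib

section
/- Let cap(r,Δ) be a cap of height Δ (with 0 ≤ Δ ≤ r) of a d-dimensional Euclidean ball of radius r. Then 2(2 - Δ/r)^{(d-1)/2} · vol_{d-1}(B_2^{d-1})/(d+1) · Δ^{(d+1)/2} · r^{(d-1)/2} ≤ vol_d(cap(r,Δ)) ≤ 2^{(d+1)/2} · vol_{d-1}(B_2^{d-1})/(d+1) · Δ^{(d+1)/2} · r^{(d-1)/2}. -/
/-!
By Cavalieri's principle, slicing the cap perpendicular to the last axis gives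
`vol(cap) = vol(B^{d-1}) ∫_{r-Δ}^r (r² - t²)^{(d-1)/2} dt`. Writing
`r² - t² = (r + t)(r - t)` with `2r - Δ ≤ r + t ≤ 2r` on the range of integration leaves
`∫_{r-Δ}^r (r - t)^{(d-1)/2} dt = Δ^{(d+1)/2} / ((d+1)/2)`, and the two bounds follow.
-/

open MeasureTheory Metric Set

theorem volume_setOf_sum_sq_le (n : ℕ) {s : ℝ} (hs : 0 ≤ s) :
    volume {y : Fin n → ℝ | ∑ i, y i ^ 2 ≤ s} =
      ENNReal.ofReal (s ^ ((n : ℝ) / 2)) *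
        volume (closedBall (0 : EuclideanSpace ℝ (Fin n)) 1) := by
  have hball : {y : Fin n → ℝ | ∑ i, y i ^ 2 ≤ s} =
      WithLp.toLp 2 ⁻¹' closedBall (0 : EuclideanSpace ℝ (Fin n)) √s := by
    ext y
    simp [EuclideanSpace.norm_eq, Real.sqrt_le_sqrt_iff hs]
  rw [hball, (PiLp.volume_preserving_toLp (Fin n)).measure_preimage
      measurableSet_closedBall.nullMeasurableSet,
    Measure.addHaar_closedBall' _ _ (Real.sqrt_nonneg s), finrank_euclideanSpace_fin,
    ← Real.rpow_natCast, Real.sqrt_eq_rpow, ← Real.rpow_mul hs]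
  ring_nf

def ballCap (n : ℕ) (r a : ℝ) : Set (EuclideanSpace ℝ (Fin (n + 1))) :=
  {x : EuclideanSpace ℝ (Fin (n + 1)) | x ∈ closedBall 0 r ∧ a ≤ x (Fin.last n)}

theorem volume_ballCap_eq_lintegral (n : ℕ) {r a : ℝ} (hr : 0 ≤ r) (ha : -r ≤ a) :
    volume (ballCap n r a) =
      (∫⁻ t in Icc a r, ENNReal.ofReal ((r ^ 2 - t ^ 2) ^ ((n : ℝ) / 2))) *
        volume (closedBall (0 : EuclideanSpace ℝ (Fin n)) 1) := by
  -- the cap in the coordinates (last coordinate, remaining coordinates)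
  set T : Set (ℝ × (Fin n → ℝ)) := {p | p.1 ^ 2 + ∑ i, p.2 i ^ 2 ≤ r ^ 2 ∧ a ≤ p.1}
  have hT : MeasurableSet T := by
    have : Measurable fun p : ℝ × (Fin n → ℝ) => p.1 ^ 2 + ∑ i, p.2 i ^ 2 := by fun_prop
    exact (measurableSet_le this measurable_const).inter
      (measurableSet_le measurable_const measurable_fst)
  have hslice (t : ℝ) : Prod.mk t ⁻¹' T =
      if t ∈ Icc a r then {y | ∑ i, y i ^ 2 ≤ r ^ 2 - t ^ 2} else ∅ := by
    ext y
    have : 0 ≤ ∑ i, y i ^ 2 := by positivity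
    split_ifs with ht
    · simp only [T, mem_preimage, mem_ofPred_eq, ht.1, and_true]
      constructor <;> intro <;> linarith
    · simp only [T, mem_preimage, mem_ofPred_eq, mem_empty_iff_false, iff_false, not_and]
      intro h hat
      exact ht ⟨hat, by nlinarith⟩
  set e := (MeasurableEquiv.toLp 2 (Fin (n + 1) → ℝ)).symm.trans
    (MeasurableEquiv.piFinSuccAbove (fun _ => ℝ) (Fin.last n))
  have he : MeasurePreserving e :=
    (volume_preserving_piFinSuccAbove (fun _ : Fin (n + 1) => ℝ) (Fin.last n)).comp
      (EuclideanSpace.volume_preserving_symm_measurableEquiv_toLp (Fin (n + 1)))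
  have hcap : ballCap n r a = e ⁻¹' T := by
    ext x
    simp [ballCap, e, T, EuclideanSpace.norm_eq, Real.sqrt_le_left hr, Fin.sum_univ_castSucc,
      Fin.init, add_comm]
  rw [hcap, he.measure_preimage_equiv, Measure.volume_eq_prod, Measure.prod_apply hT,
    ← lintegral_mul_const' _ _ measure_closedBall_lt_top.ne,
    ← lintegral_indicator measurableSet_Icc]
  congr 1 with t
  rw [hslice]
  split_ifs with ht
  · rw [indicator_of_mem ht, volume_setOf_sum_sq_le n (by nlinarith [ht.1, ht.2])]
  · simp [ht]

theorem volume_ballCap_toReal (n : ℕ) {r a : ℝ} (hr : 0 ≤ r) (ha : -r ≤ a) (har : a ≤ r) :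
    (volume (ballCap n r a)).toReal =
      (∫ t in a..r, (r ^ 2 - t ^ 2) ^ ((n : ℝ) / 2)) *
        (volume (closedBall (0 : EuclideanSpace ℝ (Fin n)) 1)).toReal := by
  have hf : Continuous fun t : ℝ => (r ^ 2 - t ^ 2) ^ ((n : ℝ) / 2) :=
    (Real.continuous_rpow_const (by positivity)).comp (by fun_prop)
  have hnonneg : 0 ≤ᵐ[volume.restrict (Icc a r)] fun t => (r ^ 2 - t ^ 2) ^ ((n : ℝ) / 2) :=
    ae_restrict_of_forall_mem measurableSet_Icc fun t ht =>
      Real.rpow_nonneg (by nlinarith [ht.1, ht.2]) _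
  rw [volume_ballCap_eq_lintegral n hr ha, ENNReal.toReal_mul,
    intervalIntegral.integral_of_le har, ← integral_Icc_eq_integral_Ioc,
    integral_eq_lintegral_of_nonneg_ae hnonneg hf.aestronglyMeasurable]

theorem integral_sub_rpow {p : ℝ} (hp : -1 < p) (a b : ℝ) :
    ∫ t in a..b, (b - t) ^ p = (b - a) ^ (p + 1) / (p + 1) := by
  rw [intervalIntegral.integral_comp_sub_left (fun u => u ^ p), sub_self,
    integral_rpow (Or.inl hp), Real.zero_rpow (by linarith), sub_zero]

theorem sq_sub_sq_rpow_bounds {p r Δ t : ℝ} (hp : 0 ≤ p) (hΔ : Δ ≤ 2 * r)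
    (ht : t ∈ Icc (r - Δ) r) :
    (2 * r - Δ) ^ p * (r - t) ^ p ≤ (r ^ 2 - t ^ 2) ^ p ∧
      (r ^ 2 - t ^ 2) ^ p ≤ (2 * r) ^ p * (r - t) ^ p := by
  obtain ⟨hlo, hhi⟩ := ht
  have hfactor : r ^ 2 - t ^ 2 = (r + t) * (r - t) := by ring
  rw [hfactor, Real.mul_rpow (by linarith) (by linarith)]
  constructor <;> gcongr <;> linarith

theorem integral_sq_sub_sq_rpow_bounds {p r Δ : ℝ} (hp : 0 ≤ p) (hΔ0 : 0 ≤ Δ)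
    (hΔ : Δ ≤ 2 * r) :
    (2 * r - Δ) ^ p * (Δ ^ (p + 1) / (p + 1)) ≤ ∫ t in r - Δ..r, (r ^ 2 - t ^ 2) ^ p ∧
      ∫ t in r - Δ..r, (r ^ 2 - t ^ 2) ^ p ≤ (2 * r) ^ p * (Δ ^ (p + 1) / (p + 1)) := by
  have hle : r - Δ ≤ r := by linarith
  have hcont (c : ℝ) : Continuous fun t : ℝ => c * (r - t) ^ p :=
    continuous_const.mul ((Real.continuous_rpow_const hp).comp (by fun_prop))
  have hf : Continuous fun t : ℝ => (r ^ 2 - t ^ 2) ^ p :=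
    (Real.continuous_rpow_const hp).comp (by fun_prop)
  have hint (c : ℝ) : ∫ t in r - Δ..r, c * (r - t) ^ p = c * (Δ ^ (p + 1) / (p + 1)) := by
    rw [intervalIntegral.integral_const_mul, integral_sub_rpow (by linarith), sub_sub_cancel]
  constructor
  · rw [← hint]
    exact intervalIntegral.integral_mono_on hle ((hcont _).intervalIntegrable _ _)
      (hf.intervalIntegrable _ _) fun t ht => (sq_sub_sq_rpow_bounds hp hΔ ht).1
  · rw [← hint]
    exact intervalIntegral.integral_mono_on hle (hf.intervalIntegrable _ _)
      ((hcont _).intervalIntegrable _ _) fun t ht => (sq_sub_sq_rpow_bounds hp hΔ ht).2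

/-- Volume bounds for a cap of height `Δ` (with `0 ≤ Δ ≤ r`) of a `d`-dimensional Euclidean
ball of radius `r`:
`2(2-Δ/r)^{(d-1)/2} vol_{d-1}(B_2^{d-1})/(d+1) Δ^{(d+1)/2} r^{(d-1)/2} ≤ vol_d(cap(r,Δ))
  ≤ 2^{(d+1)/2} vol_{d-1}(B_2^{d-1})/(d+1) Δ^{(d+1)/2} r^{(d-1)/2}`. -/
theorem stmt_1 (d : ℕ) (hd : 1 ≤ d) (r Δ : ℝ) (hr : 0 < r) (hΔ0 : 0 ≤ Δ) (hΔr : Δ ≤ r)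
    (cap : Set (EuclideanSpace ℝ (Fin d)))
    (hcap : cap = {x : EuclideanSpace ℝ (Fin d) |
      x ∈ Metric.closedBall 0 r ∧ r - Δ ≤ x ⟨d - 1, by omega⟩})
    (voldball : ℝ)
    (hvol : voldball = (volume (Metric.closedBall (0 : EuclideanSpace ℝ (Fin (d - 1))) 1)).toReal) :
    2 * (2 - Δ / r) ^ (((d : ℝ) - 1) / 2) * (voldball / ((d : ℝ) + 1)) *
        Δ ^ (((d : ℝ) + 1) / 2) * r ^ (((d : ℝ) - 1) / 2) ≤
      (volume cap).toReal ∧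
    (volume cap).toReal ≤
      (2 : ℝ) ^ (((d : ℝ) + 1) / 2) * (voldball / ((d : ℝ) + 1)) *
        Δ ^ (((d : ℝ) + 1) / 2) * r ^ (((d : ℝ) - 1) / 2) := by
  obtain ⟨n, rfl⟩ : ∃ n, d = n + 1 := ⟨d - 1, by omega⟩
  have hcap' : cap = ballCap n r (r - Δ) := hcap
  have hvol' : voldball = (volume (closedBall (0 : EuclideanSpace ℝ (Fin n)) 1)).toReal := hvol
  rw [hcap', volume_ballCap_toReal n hr.le (by linarith) (by linarith), ← hvol']
  set p : ℝ := (n : ℝ) / 2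
  have hp : (((n + 1 : ℕ) : ℝ) - 1) / 2 = p := by push_cast; ring
  have hq : (((n + 1 : ℕ) : ℝ) + 1) / 2 = p + 1 := by push_cast; ring
  have hdim : ((n + 1 : ℕ) : ℝ) + 1 = 2 * (p + 1) := by push_cast; ring
  have hV : 0 ≤ voldball := hvol' ▸ ENNReal.toReal_nonneg
  obtain ⟨hlow, hup⟩ :=
    integral_sq_sub_sq_rpow_bounds (p := p) (r := r) (by positivity) hΔ0 (by linarith)
  rw [hp, hq, hdim]
  constructor
  · calc 2 * (2 - Δ / r) ^ p * (voldball / (2 * (p + 1))) * Δ ^ (p + 1) * r ^ p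
          = (2 * r - Δ) ^ p * (Δ ^ (p + 1) / (p + 1)) * voldball := by
            rw [show 2 * r - Δ = (2 - Δ / r) * r by field_simp,
              Real.mul_rpow (by rw [sub_nonneg, div_le_iff₀ hr]; linarith) hr.le]
            field_simp
        _ ≤ _ := mul_le_mul_of_nonneg_right hlow hV
  · calc _ ≤ (2 * r) ^ p * (Δ ^ (p + 1) / (p + 1)) * voldball :=
          mul_le_mul_of_nonneg_right hup hV
        _ = _ := by
            rw [Real.mul_rpow zero_le_two hr.le, Real.rpow_add_one two_ne_zero]
            field_simp
end

section
/- Let K be a convex body in R^d and for x ∈ ∂K let r(x) be the largest radius r ≥ 0 such that the Euclidean ball B_2^d(x - r·N(x), r) is contained in K. Then for every α ∈ (0,1), the integral of r(x)^{-α} over ∂K with respect to the surface measure is finite. -/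
/-!
For `t > 0` let `K_t = {y | B(y, t) ⊆ K}` be the inner parallel body of `K`. If `x ∈ ∂K` lies
within distance `t` of `K_t`, the supporting half-space at `x` forces the nearest point of `K_t`
to be `x - t N(x)`, so `r(x) ≥ t`. The metric projection onto `K_t` is `1`-Lipschitz and maps
these points onto `∂K_t`, and projecting onto the homothetic copy `z + (1 - t/ρ)(K - z) ⊆ K_t`
(where `B(z, ρ) ⊆ K`) maps `∂K_t` onto its boundary. Hence the surface measure of `{r < t}` is
at most `(1 - (1 - t/ρ)^(d-1)) μ(∂K) = O(t)`, and such a weak-type bound makes `r^(-α)`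
integrable for `α < 1`. The finiteness of `μ(∂K)` comes from the same monotonicity of surface
area, comparing `K` with a cube.
-/

open MeasureTheory Metric Set
open scoped ENNReal RealInnerProductSpace

theorem ofReal_rpow_neg_le_of_le {α a b : ℝ} (hα : 0 ≤ α) (hab : a ≤ b) :
    ENNReal.ofReal b ^ (-α) ≤ ENNReal.ofReal a ^ (-α) := by
  rw [ENNReal.rpow_neg, ENNReal.rpow_neg]
  exact ENNReal.inv_le_inv.2 (ENNReal.rpow_le_rpow (ENNReal.ofReal_le_ofReal hab) hα)

theorem summable_rpow_neg_mul_geometric {α T : ℝ} (hα : α < 1) (hT : 0 < T) :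
    Summable fun n : ℕ => (T * 2⁻¹ ^ (n + 1)) ^ (-α) * (T * 2⁻¹ ^ n) := by
  set q : ℝ := 2⁻¹ ^ (1 - α)
  have hq : q < 1 := Real.rpow_lt_one (by norm_num) (by norm_num) (by linarith)
  have e n : (T * 2⁻¹ ^ (n + 1)) ^ (-α) * (T * 2⁻¹ ^ n) = 2 * T ^ (1 - α) * q * q ^ n := by
    have hτ : 0 < T * 2⁻¹ ^ (n + 1) := by positivity
    rw [show T * 2⁻¹ ^ n = 2 * (T * 2⁻¹ ^ (n + 1)) by ring, mul_left_comm,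
      ← Real.rpow_add_one hτ.ne', neg_add_eq_sub, Real.mul_rpow hT.le (by positivity),
      ← Real.rpow_pow_comm (by norm_num), pow_succ]
    ring
  simpa only [e] using (summable_geometric_of_lt_one (by positivity) hq).mul_left _

theorem ofReal_rpow_neg_le_add_tsum_indicator {X : Type*} {f : X → ℝ} {α T : ℝ} (hα : 0 ≤ α)
    (hT : 0 < T) {B : ℕ → Set X} (hB : ∀ n, {x | f x < T * 2⁻¹ ^ n} ⊆ B n) (x : X) :
    ENNReal.ofReal (f x) ^ (-α) ≤ ENNReal.ofReal T ^ (-α) +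
      ∑' n, (B n).indicator (fun _ => ENNReal.ofReal (T * 2⁻¹ ^ (n + 1)) ^ (-α)) x := by
  set c : ℕ → ℝ≥0∞ := fun n => ENNReal.ofReal (T * 2⁻¹ ^ (n + 1)) ^ (-α)
  by_cases h : ∃ n, T * 2⁻¹ ^ n ≤ f x
  · obtain ⟨n, hn⟩ : ∃ n, Nat.find h = n := ⟨_, rfl⟩
    have hle := ofReal_rpow_neg_le_of_le hα (hn ▸ Nat.find_spec h)
    rcases n with _ | k
    · exact hle.trans (by simp)
    · have hxB : x ∈ B k := hB k <| not_le.1 (Nat.find_min h (hn ▸ k.lt_succ_self))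
      calc _ ≤ c k := hle
        _ ≤ ∑' n, (B n).indicator (fun _ => c n) x := by
            simpa [indicator_of_mem hxB] using
              ENNReal.le_tsum (f := fun n => (B n).indicator (fun _ => c n) x) k
        _ ≤ _ := le_add_self
  · push Not at h
    suffices ∑' n, (B n).indicator (fun _ => c n) x = ⊤ from le_top.trans_eq (by rw [this, add_top])
    refine top_unique ((ENNReal.tsum_const_eq_top_of_ne_zero (c := ENNReal.ofReal T ^ (-α))
      ?_).symm.le.trans (ENNReal.tsum_le_tsum fun n => ?_))
    · exact (ENNReal.rpow_pos (ENNReal.ofReal_pos.2 hT) ENNReal.ofReal_ne_top).ne'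
    · rw [indicator_of_mem (hB n (h n))]
      exact ofReal_rpow_neg_le_of_le hα <|
        mul_le_of_le_one_right hT.le (pow_le_one₀ (by norm_num) (by norm_num))

/- `f` need not be measurable, so `f ^ (-α)` is bounded by a measurable dyadic majorant rather
than integrated by the layer-cake formula. -/
theorem lintegral_ofReal_rpow_neg_lt_top {X : Type*} [MeasurableSpace X] {μ : Measure X}
    [IsFiniteMeasure μ] {f : X → ℝ} {α T : ℝ} {C : ℝ≥0∞} (hα₀ : 0 ≤ α) (hα₁ : α < 1)
    (hT : 0 < T) (hC : C ≠ ⊤) (hf : ∀ t ∈ Ioc 0 T, μ {x | f x < t} ≤ C * ENNReal.ofReal t) :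
    ∫⁻ x, ENNReal.ofReal (f x) ^ (-α) ∂μ < ⊤ := by
  set τ : ℕ → ℝ := fun n => T * 2⁻¹ ^ n
  have hτ n : τ n ∈ Ioc 0 T :=
    ⟨by positivity, mul_le_of_le_one_right hT.le (pow_le_one₀ (by norm_num) (by norm_num))⟩
  set B : ℕ → Set X := fun n => toMeasurable μ {x | f x < τ n}
  set c : ℕ → ℝ≥0∞ := fun n => ENNReal.ofReal (τ (n + 1)) ^ (-α)
  have hB n : ∫⁻ x, (B n).indicator (fun _ => c n) x ∂μ ≤
      C * ENNReal.ofReal (τ (n + 1) ^ (-α) * τ n) := by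
    rw [lintegral_indicator_const (measurableSet_toMeasurable _ _), measure_toMeasurable,
      ENNReal.ofReal_mul (by positivity), ← ENNReal.ofReal_rpow_of_pos (hτ _).1, mul_left_comm]
    exact mul_le_mul_right (hf _ (hτ n)) _
  have hT' : ENNReal.ofReal T ^ (-α) ≠ ⊤ := by
    simp [ENNReal.rpow_neg, (ENNReal.rpow_pos (ENNReal.ofReal_pos.2 hT) ENNReal.ofReal_ne_top).ne']
  calc ∫⁻ x, ENNReal.ofReal (f x) ^ (-α) ∂μ
      ≤ ∫⁻ x, ENNReal.ofReal T ^ (-α) + ∑' n, (B n).indicator (fun _ => c n) x ∂μ :=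
        lintegral_mono <| ofReal_rpow_neg_le_add_tsum_indicator hα₀ hT fun n =>
          subset_toMeasurable μ _
    _ = ENNReal.ofReal T ^ (-α) * μ univ + ∑' n, ∫⁻ x, (B n).indicator (fun _ => c n) x ∂μ := by
        rw [lintegral_add_left measurable_const, lintegral_const, lintegral_tsum fun n =>
          (measurable_const.indicator (measurableSet_toMeasurable _ _)).aemeasurable]
    _ ≤ ENNReal.ofReal T ^ (-α) * μ univ + C * ENNReal.ofReal (∑' n, τ (n + 1) ^ (-α) * τ n) := by
        rw [ENNReal.ofReal_tsum_of_nonneg (fun n => by positivity)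
          (summable_rpow_neg_mul_geometric hα₁ hT), ← ENNReal.tsum_mul_left]
        gcongr with n
        exact hB n
    _ < ⊤ := ENNReal.add_lt_top.2 ⟨ENNReal.mul_lt_top hT'.lt_top (measure_lt_top _ _),
        ENNReal.mul_lt_top hC.lt_top ENNReal.ofReal_lt_top⟩

section Projection

variable {F : Type*} [NormedAddCommGroup F] [InnerProductSpace ℝ F]

theorem dist_le_of_forall_real_inner_sub_le_zero {C : Set F} {u u' v v' : F} (hv : v ∈ C)
    (hv' : v' ∈ C) (h : ∀ p ∈ C, ⟪u - v, p - v⟫ ≤ 0) (h' : ∀ p ∈ C, ⟪u' - v', p - v'⟫ ≤ 0) :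
    dist v v' ≤ dist u u' := by
  rw [dist_eq_norm, dist_eq_norm]
  have key : ‖v - v'‖ ^ 2 ≤ ⟪u - u', v - v'⟫ := by
    have := add_nonpos (h v' hv') (h' v hv)
    rw [← real_inner_self_eq_norm_sq]
    have e : ⟪u - v, v' - v⟫ + ⟪u' - v', v - v'⟫ = ⟪v - v', v - v'⟫ - ⟪u - u', v - v'⟫ := by
      simp only [inner_sub_left, inner_sub_right, real_inner_comm]
      ring
    linarith
  nlinarith [real_inner_le_norm (u - u') (v - v'), norm_nonneg (v - v'), norm_nonneg (u - u')]

theorem eq_of_forall_real_inner_sub_le_zero {C : Set F} {u v v' : F} (hv : v ∈ C) (hv' : v' ∈ C)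
    (h : ∀ p ∈ C, ⟪u - v, p - v⟫ ≤ 0) (h' : ∀ p ∈ C, ⟪u - v', p - v'⟫ ≤ 0) : v = v' :=
  dist_le_zero.1 <| (dist_le_of_forall_real_inner_sub_le_zero hv hv' h h').trans_eq (dist_self u)

theorem forall_real_inner_sub_le_zero_of_forall_norm_sub_le {C : Set F} (hC : Convex ℝ C)
    {u v : F} (hv : v ∈ C) (h : ∀ p ∈ C, ‖u - v‖ ≤ ‖u - p‖) : ∀ p ∈ C, ⟪u - v, p - v⟫ ≤ 0 := by
  have : Nonempty C := ⟨⟨v, hv⟩⟩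
  refine (norm_eq_iInf_iff_real_inner_le_zero hC hv).1 (le_antisymm ?_ ?_)
  · exact le_ciInf fun p => h p p.2
  · exact ciInf_le (f := fun p : C => ‖u - p‖)
      ⟨0, forall_mem_range.2 fun _ => norm_nonneg _⟩ ⟨v, hv⟩

theorem exists_lipschitzWith_one_proj [CompleteSpace F] {C : Set F} (hC : Convex ℝ C)
    (hCc : IsClosed C) (hne : C.Nonempty) :
    ∃ P : F → F, (∀ u, P u ∈ C ∧ ∀ p ∈ C, ⟪u - P u, p - P u⟫ ≤ 0) ∧ LipschitzWith 1 P := by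
  choose P hPC hPmin using exists_norm_eq_iInf_of_complete_convex hne hCc.isComplete hC
  have hP u : P u ∈ C ∧ ∀ p ∈ C, ⟪u - P u, p - P u⟫ ≤ 0 :=
    ⟨hPC u, (norm_eq_iInf_iff_real_inner_le_zero hC (hPC u)).1 (hPmin u)⟩
  refine ⟨P, hP, LipschitzWith.of_dist_le_mul fun u u' => ?_⟩
  rw [NNReal.coe_one, one_mul]
  exact dist_le_of_forall_real_inner_sub_le_zero (hP u).1 (hP u').1 (hP u).2 (hP u').2

theorem exists_unit_real_inner_sub_le_zero_of_mem_frontier [CompleteSpace F] {C : Set F}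
    (hC : Convex ℝ C) (hCi : (interior C).Nonempty) {x : F} (hx : x ∈ frontier C) :
    ∃ u : F, ‖u‖ = 1 ∧ ∀ p ∈ C, ⟪u, p - x⟫ ≤ 0 := by
  obtain ⟨f, hf⟩ := geometric_hahn_banach_open_point hC.interior isOpen_interior hx.2
  obtain ⟨a, ha⟩ := hCi
  set v := (InnerProductSpace.toDual ℝ F).symm f
  have hv y : ⟪v, y⟫ = f y := InnerProductSpace.toDual_symm_apply
  have hv0 : v ≠ 0 := by
    rintro h
    simpa [← hv, h] using hf a ha
  have hle : ∀ p ∈ C, f p ≤ f x := by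
    have : closure (interior C) ⊆ {y | f y ≤ f x} :=
      closure_minimal (fun y hy => (hf y hy).le) (isClosed_le f.continuous continuous_const)
    exact fun p hp => this (hC.closure_interior_eq_closure_of_nonempty_interior ⟨a, ha⟩ ▸
      subset_closure hp)
  refine ⟨‖v‖⁻¹ • v, by simp [norm_smul, hv0], fun p hp => ?_⟩
  rw [real_inner_smul_left, inner_sub_right, hv, hv]
  exact mul_nonpos_of_nonneg_of_nonpos (by positivity) (by linarith [hle p hp])

theorem frontier_subset_image_frontier_of_subset [CompleteSpace F] {C D : Set F}
    (hC : Convex ℝ C) (hCc : IsClosed C) (hCi : (interior C).Nonempty) (hCD : C ⊆ D)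
    (hD : Bornology.IsBounded D) {P : F → F} (hP : ∀ u, P u ∈ C ∧ ∀ p ∈ C, ⟪u - P u, p - P u⟫ ≤ 0) :
    frontier C ⊆ P '' frontier D := by
  intro w hw
  have hwC : w ∈ C := hCc.frontier_subset hw
  obtain ⟨u, hu, hwu⟩ := exists_unit_real_inner_sub_le_zero_of_mem_frontier hC hCi hw
  -- `|s|` folds the line `w + s • u` onto the outward ray, along which `D` is eventually left
  set γ : ℝ → F := fun s => w + |s| • u
  have hγ : Continuous γ := by fun_prop
  obtain ⟨R, hR⟩ := hD.subset_closedBall w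
  have hfr : (frontier (γ ⁻¹' D)).Nonempty := by
    refine nonempty_frontier_iff.2 ⟨⟨0, by simpa [γ] using hCD hwC⟩, fun h => ?_⟩
    have := hR (show |R| + 1 ∈ γ ⁻¹' D from h ▸ mem_univ _)
    rw [mem_closedBall, dist_eq_norm] at this
    simp only [γ, add_sub_cancel_left, norm_smul, hu, mul_one, Real.norm_eq_abs, abs_abs] at this
    linarith [le_abs_self R, le_abs_self (|R| + 1)]
  obtain ⟨s, hs⟩ := hfr
  refine ⟨γ s, hγ.frontier_preimage_subset D hs, ?_⟩
  refine eq_of_forall_real_inner_sub_le_zero (hP _).1 hwC (hP _).2 fun p hp => ?_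
  simp only [γ, add_sub_cancel_left, real_inner_smul_left]
  exact mul_nonpos_of_nonneg_of_nonpos (abs_nonneg s) (hwu p hp)

theorem hausdorffMeasure_frontier_le_of_subset [CompleteSpace F] [MeasurableSpace F]
    [BorelSpace F] {C D : Set F} (hC : Convex ℝ C) (hCc : IsClosed C)
    (hCi : (interior C).Nonempty) (hCD : C ⊆ D) (hD : Bornology.IsBounded D) {s : ℝ}
    (hs : 0 ≤ s) : μH[s] (frontier C) ≤ μH[s] (frontier D) := by
  obtain ⟨P, hP, hPlip⟩ := exists_lipschitzWith_one_proj hC hCc (hCi.mono interior_subset)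
  calc μH[s] (frontier C) ≤ μH[s] (P '' frontier D) :=
        measure_mono (frontier_subset_image_frontier_of_subset hC hCc hCi hCD hD hP)
    _ ≤ μH[s] (frontier D) := by
        simpa using hPlip.hausdorffMeasure_image_le hs (frontier D)

end Projection

theorem hausdorffMeasure_sphere_pi_lt_top (m : ℕ) (R : ℝ) :
    μH[m] (sphere (0 : Fin (m + 1) → ℝ) R) < ⊤ := by
  have hsub : sphere (0 : Fin (m + 1) → ℝ) R ⊆
      ⋃ p ∈ (univ : Set (Fin (m + 1))) ×ˢ ({R, -R} : Set ℝ),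
        Fin.insertNth p.1 p.2 '' closedBall 0 R := by
    intro x hx
    rw [mem_sphere_zero_iff_norm] at hx
    obtain ⟨i, -, hi⟩ := Finset.exists_mem_eq_sup Finset.univ Finset.univ_nonempty
      fun j => ‖x j‖₊
    have hxi : |x i| = R := by
      rw [← hx, Pi.norm_def, hi, coe_nnnorm, Real.norm_eq_abs]
    refine mem_biUnion (x := (i, x i)) ⟨mem_univ _, ?_⟩ ⟨i.removeNth x, ?_, ?_⟩
    · exact (abs_eq (hx ▸ norm_nonneg x)).1 hxi
    · rw [mem_closedBall_zero_iff, ← hx]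
      exact pi_norm_le_iff_of_nonneg (norm_nonneg x) |>.2 fun k => norm_le_pi_norm x _
    · exact Fin.insertNth_self_removeNth i x
  refine (measure_mono hsub).trans_lt (measure_biUnion_lt_top (finite_univ.prod (toFinite _))
    fun p _ => ?_)
  have hiso : Isometry (Fin.insertNth (α := fun _ => ℝ) p.1 p.2) :=
    Isometry.of_dist_eq fun a b => by simp [Fin.dist_insertNth_insertNth]
  rw [hiso.hausdorffMeasure_image (Or.inl m.cast_nonneg),
    show (m : ℝ) = Fintype.card (Fin m) by simp, hausdorffMeasure_pi_real]
  exact measure_closedBall_lt_top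

theorem hausdorffMeasure_frontier_lt_top {m : ℕ} {K : Set (EuclideanSpace ℝ (Fin (m + 1)))}
    (hK : Bornology.IsBounded K) (hKc : Convex ℝ K) (hKcl : IsClosed K)
    (hKi : (interior K).Nonempty) : μH[m] (frontier K) < ⊤ := by
  obtain ⟨R, hR⟩ := hK.subset_closedBall 0
  set D := WithLp.ofLp ⁻¹' closedBall (0 : Fin (m + 1) → ℝ) R
  have hKD : K ⊆ D := fun x hx => by
    have hxR := mem_closedBall_zero_iff.1 (hR hx)
    exact mem_closedBall_zero_iff.2 <| (pi_norm_le_iff_of_nonneg ((norm_nonneg x).trans hxR)).2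
      fun i => (PiLp.norm_apply_le x i).trans hxR
  have hofLp := PiLp.antilipschitzWith_ofLp 2 fun _ : Fin (m + 1) => ℝ
  calc μH[m] (frontier K) ≤ μH[m] (frontier D) :=
        hausdorffMeasure_frontier_le_of_subset hKc hKcl hKi hKD
          (hofLp.isBounded_preimage isBounded_closedBall) m.cast_nonneg
    _ ≤ μH[m] (WithLp.ofLp ⁻¹' sphere (0 : Fin (m + 1) → ℝ) R) := measure_mono <|
        ((PiLp.continuous_ofLp 2 _).frontier_preimage_subset _).trans
          (preimage_mono frontier_closedBall_subset_sphere)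
    _ ≤ _ * μH[m] (sphere (0 : Fin (m + 1) → ℝ) R) :=
        hofLp.hausdorffMeasure_preimage_le m.cast_nonneg _
    _ < ⊤ := ENNReal.mul_lt_top (ENNReal.rpow_lt_top_of_nonneg m.cast_nonneg ENNReal.coe_ne_top)
        (hausdorffMeasure_sphere_pi_lt_top m R)

section InnerParallelBody

variable {F : Type*} [NormedAddCommGroup F]

def innerParallelBody (K : Set F) (t : ℝ) : Set F := {y | closedBall y t ⊆ K}

variable {K : Set F} {t : ℝ}

theorem innerParallelBody_subset (ht : 0 ≤ t) : innerParallelBody K t ⊆ K :=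
  fun _ hy => hy (mem_closedBall_self ht)

theorem isClosed_innerParallelBody (hK : IsClosed K) : IsClosed (innerParallelBody K t) := by
  have : innerParallelBody K t = ⋂ v ∈ closedBall (0 : F) t, (· + v) ⁻¹' K := by
    ext y
    simp only [innerParallelBody, mem_iInter, mem_preimage, mem_closedBall_zero_iff]
    refine ⟨fun h v hv => h (by simpa [dist_eq_norm] using hv), fun h w hw => ?_⟩
    simpa using h (w - y) (by rwa [← dist_eq_norm])
  rw [this]
  exact isClosed_biInter fun v _ => hK.preimage (continuous_add_const v)

theorem le_dist_of_mem_innerParallelBody {x p : F} (hx : x ∉ interior K)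
    (hp : p ∈ innerParallelBody K t) : t ≤ dist x p :=
  not_lt.1 fun h => hx (interior_maximal (ball_subset_closedBall.trans hp) isOpen_ball h)

section NormedSpace

variable [NormedSpace ℝ F]

theorem convex_innerParallelBody (hK : Convex ℝ K) : Convex ℝ (innerParallelBody K t) := by
  intro y₁ h₁ y₂ h₂ a b ha hb hab w hw
  have hmem (y : F) : w - (a • y₁ + b • y₂) + y ∈ closedBall y t := by
    simpa [dist_eq_norm] using hw
  convert hK (h₁ (hmem y₁)) (h₂ (hmem y₂)) ha hb hab using 1
  obtain rfl : b = 1 - a := by linarith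
  module

theorem homothety_image_subset_innerParallelBody (hK : Convex ℝ K) {z : F} {ρ : ℝ}
    (hball : closedBall z ρ ⊆ K) (ht : 0 < t) (htρ : t ≤ ρ) :
    AffineMap.homothety z (1 - t / ρ) '' K ⊆ innerParallelBody K t := by
  rintro _ ⟨y, hy, rfl⟩ w hw
  have hρ : 0 < ρ := ht.trans_le htρ
  set s := t / ρ
  have hs : 0 < s := div_pos ht hρ
  set v := z + s⁻¹ • (w - AffineMap.homothety z (1 - s) y)
  have hv : v ∈ closedBall z ρ := by
    rw [mem_closedBall, dist_eq_norm, add_sub_cancel_left, norm_smul, Real.norm_eq_abs,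
      abs_of_pos (inv_pos.2 hs), inv_mul_le_iff₀ hs, ← dist_eq_norm]
    calc dist w _ ≤ t := hw
      _ = s * ρ := (div_mul_cancel₀ t hρ.ne').symm
  have hw : w = (1 - s) • y + s • v := by
    simp only [v, smul_add, smul_inv_smul₀ hs.ne', AffineMap.homothety_apply, vsub_eq_sub,
      vadd_eq_add]
    module
  rw [hw]
  refine hK hy (hball hv) (by linarith [div_le_one_of_le₀ htρ hρ.le]) hs.le (by ring)

theorem mem_interior_innerParallelBody [ProperSpace F] {y : F} (ht : 0 ≤ t)
    (h : closedBall y t ⊆ interior K) : y ∈ interior (innerParallelBody K t) := by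
  obtain ⟨ε, hε, hεK⟩ :=
    (isCompact_closedBall y t).exists_cthickening_subset_open isOpen_interior h
  rw [cthickening_closedBall hε.le ht] at hεK
  refine mem_interior.2 ⟨ball y ε, fun y' hy' => ?_, isOpen_ball, mem_ball_self hε⟩
  refine (closedBall_subset_closedBall' ?_).trans (hεK.trans interior_subset)
  linarith [mem_ball.1 hy']

theorem exists_mem_frontier_dist_eq_of_mem_frontier_innerParallelBody [ProperSpace F]
    (hK : IsClosed K) (ht : 0 ≤ t) {y : F} (hy : y ∈ frontier (innerParallelBody K t)) :
    ∃ z ∈ frontier K, dist z y = t := by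
  have hyK : y ∈ innerParallelBody K t := (isClosed_innerParallelBody hK).frontier_subset hy
  obtain ⟨z, hz, hzK⟩ := not_subset.1 fun h => hy.2 (mem_interior_innerParallelBody ht h)
  refine ⟨z, ⟨subset_closure (hyK hz), hzK⟩, le_antisymm hz ?_⟩
  simpa [dist_comm] using le_dist_of_mem_innerParallelBody hzK hyK

end NormedSpace

section InnerProductSpace

variable [InnerProductSpace ℝ F]

theorem eq_sub_smul_of_mem_innerParallelBody {x N y : F} (hx : x ∉ interior K) (hN : ‖N‖ = 1)
    (hNK : ∀ p ∈ K, ⟪p - x, N⟫ ≤ 0) (ht : 0 ≤ t) (hy : y ∈ innerParallelBody K t)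
    (hxy : dist x y ≤ t) : y = x - t • N := by
  have hdist : ‖x - y‖ = t := by
    rw [← dist_eq_norm]
    exact le_antisymm hxy (le_dist_of_mem_innerParallelBody hx hy)
  have hinner : t ≤ ⟪x - y, N⟫ := by
    have := hNK (y + t • N) (hy (by simp [dist_eq_norm, norm_smul, hN, abs_of_nonneg ht]))
    rw [show y + t • N - x = t • N - (x - y) by abel, inner_sub_left, real_inner_smul_left,
      real_inner_self_eq_norm_sq, hN] at this
    linarith
  have : ‖(x - y) - t • N‖ ^ 2 ≤ 0 := by
    rw [norm_sub_sq_real, hdist, norm_smul, hN, real_inner_smul_right, Real.norm_eq_abs,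
      abs_of_nonneg ht]
    nlinarith
  rw [eq_sub_iff_add_eq, add_comm, ← eq_sub_iff_add_eq]
  exact (sub_eq_zero.1 (norm_eq_zero.1 (pow_eq_zero_iff two_ne_zero |>.1
    (le_antisymm this (sq_nonneg _))))).symm

theorem closedBall_sub_smul_subset_of_mem_cthickening (hK : IsCompact K) {x N : F}
    (hx : x ∉ interior K) (hN : ‖N‖ = 1) (hNK : ∀ p ∈ K, ⟪p - x, N⟫ ≤ 0) (ht : 0 ≤ t)
    (hxt : x ∈ cthickening t (innerParallelBody K t)) : closedBall (x - t • N) t ⊆ K := by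
  have hKt : IsCompact (innerParallelBody K t) :=
    hK.of_isClosed_subset (isClosed_innerParallelBody hK.isClosed) (innerParallelBody_subset ht)
  rw [hKt.cthickening_eq_biUnion_closedBall ht] at hxt
  obtain ⟨y, hy, hxy⟩ := mem_iUnion₂.1 hxt
  rw [← eq_sub_smul_of_mem_innerParallelBody hx hN hNK ht hy hxy]
  exact hy

theorem hausdorffMeasure_frontier_innerParallelBody_le [ProperSpace F] [MeasurableSpace F]
    [BorelSpace F] (hK : IsClosed K) (hKc : Convex ℝ K) (ht : 0 ≤ t)
    (hne : (innerParallelBody K t).Nonempty) {s : ℝ} (hs : 0 ≤ s) :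
    μH[s] (frontier (innerParallelBody K t)) ≤
      μH[s] (frontier K ∩ cthickening t (innerParallelBody K t)) := by
  have hKtc := isClosed_innerParallelBody (t := t) hK
  obtain ⟨P, hP, hPlip⟩ := exists_lipschitzWith_one_proj (convex_innerParallelBody hKc) hKtc hne
  have hsub : frontier (innerParallelBody K t) ⊆
      P '' (frontier K ∩ cthickening t (innerParallelBody K t)) := by
    intro y hy
    have hyK := hKtc.frontier_subset hy
    obtain ⟨z, hz, hzy⟩ := exists_mem_frontier_dist_eq_of_mem_frontier_innerParallelBody hK ht hy
    refine ⟨z, ⟨hz, mem_cthickening_of_dist_le z y t _ hyK hzy.le⟩, ?_⟩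
    refine eq_of_forall_real_inner_sub_le_zero (hP z).1 hyK (hP z).2 ?_
    refine forall_real_inner_sub_le_zero_of_forall_norm_sub_le (convex_innerParallelBody hKc)
      hyK fun p hp => ?_
    rw [← dist_eq_norm, ← dist_eq_norm, hzy]
    exact le_dist_of_mem_innerParallelBody hz.2 hp
  calc _ ≤ μH[s] (P '' (frontier K ∩ cthickening t (innerParallelBody K t))) := measure_mono hsub
    _ ≤ _ := by simpa using hPlip.hausdorffMeasure_image_le hs _

theorem ofReal_rpow_mul_hausdorffMeasure_frontier_le [ProperSpace F] [MeasurableSpace F]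
    [BorelSpace F] (hK : IsCompact K) (hKc : Convex ℝ K) {z : F} {ρ : ℝ}
    (hball : closedBall z ρ ⊆ K) (ht : 0 < t) (htρ : t < ρ) {s : ℝ} (hs : 0 ≤ s) :
    ENNReal.ofReal ((1 - t / ρ) ^ s) * μH[s] (frontier K) ≤
      μH[s] (frontier K ∩ cthickening t (innerParallelBody K t)) := by
  have hρ : 0 < ρ := ht.trans htρ
  set c := 1 - t / ρ
  have hc : 0 < c := sub_pos.2 ((div_lt_one hρ).2 htρ)
  set h := AffineMap.homothety z c
  have hfr : h '' frontier K = frontier (h '' K) :=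
    ((AffineEquiv.homothetyUnitsMulHom z (Units.mk0 c hc.ne')).toEquiv.toHomeomorphOfContinuousOpen
      (AffineMap.homothety_continuous z c)
      (AffineMap.homothety_isOpenMap z c hc.ne')).image_frontier K
  have hzK : z ∈ interior K := mem_interior.2 ⟨ball z ρ, ball_subset_closedBall.trans hball,
    isOpen_ball, mem_ball_self hρ⟩
  have hscale : ENNReal.ofReal (c ^ s) * μH[s] (frontier K) = μH[s] (h '' frontier K) := by
    rw [hausdorffMeasure_homothety_image hs z hc.ne', ENNReal.smul_def, smul_eq_mul,
      Real.nnnorm_of_nonneg hc.le, ENNReal.ofReal, Real.toNNReal_rpow_of_nonneg hc.le,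
      Real.toNNReal_of_nonneg hc.le]
  calc ENNReal.ofReal (c ^ s) * μH[s] (frontier K) = μH[s] (frontier (h '' K)) := by
        rw [hscale, hfr]
    _ ≤ μH[s] (frontier (innerParallelBody K t)) :=
        hausdorffMeasure_frontier_le_of_subset (hKc.affine_image h)
          (hK.image (AffineMap.homothety_continuous z c)).isClosed
          ⟨h z, (AffineMap.homothety_isOpenMap z c hc.ne').image_interior_subset K ⟨z, hzK, rfl⟩⟩
          (homothety_image_subset_innerParallelBody hKc hball ht htρ.le)
          (hK.isBounded.subset (innerParallelBody_subset ht.le)) hs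
    _ ≤ _ := hausdorffMeasure_frontier_innerParallelBody_le hK.isClosed hKc ht.le
          ⟨z, (closedBall_subset_closedBall htρ.le).trans hball⟩ hs

theorem hausdorffMeasure_frontier_diff_cthickening_le [ProperSpace F] [MeasurableSpace F]
    [BorelSpace F] (hK : IsCompact K) (hKc : Convex ℝ K) {z : F} {ρ : ℝ}
    (hball : closedBall z ρ ⊆ K) (ht : 0 < t) (htρ : t < ρ) {m : ℕ}
    (hfin : μH[m] (frontier K) ≠ ⊤) :
    μH[m] (frontier K \ cthickening t (innerParallelBody K t)) ≤
      ENNReal.ofReal (m * (t / ρ)) * μH[m] (frontier K) := by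
  set a := t / ρ
  have ha : a ≤ 1 := (div_le_one (ht.trans htρ)).2 htρ.le
  have hle := ofReal_rpow_mul_hausdorffMeasure_frontier_le hK hKc hball ht htρ m.cast_nonneg
  rw [Real.rpow_natCast] at hle
  have hbern : 1 - m * a ≤ (1 - a) ^ m := by
    simpa [sub_eq_add_neg] using one_add_mul_le_pow (by linarith : (-2 : ℝ) ≤ -a) m
  calc _ = μH[m] (frontier K) - μH[m] (frontier K ∩ cthickening t (innerParallelBody K t)) := by
        rw [← sdiff_self_inter, measure_sdiff inter_subset_left
          (isClosed_frontier.inter isClosed_cthickening).measurableSet.nullMeasurableSet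
          (measure_ne_top_of_subset inter_subset_left hfin)]
    _ ≤ μH[m] (frontier K) - ENNReal.ofReal ((1 - a) ^ m) * μH[m] (frontier K) :=
        tsub_le_tsub_left hle _
    _ = ENNReal.ofReal (1 - (1 - a) ^ m) * μH[m] (frontier K) := by
        rw [ENNReal.ofReal_sub _ (pow_nonneg (sub_nonneg.2 ha) m), ENNReal.ofReal_one,
          ENNReal.sub_mul fun _ _ => hfin, one_mul]
    _ ≤ _ := by gcongr; linarith

theorem le_sSup_of_closedBall_sub_smul_subset (hK : Bornology.IsBounded K) {x N : F}
    (hN : ‖N‖ = 1) (ht : 0 ≤ t) (h : closedBall (x - t • N) t ⊆ K) :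
    t ≤ sSup {r : ℝ | 0 ≤ r ∧ closedBall (x - r • N) r ⊆ K} := by
  refine le_csSup ⟨diam K / 2, ?_⟩ ⟨ht, h⟩
  rintro r ⟨hr, hrK⟩
  have hx : x ∈ K := hrK (by simp [norm_smul, hN, abs_of_nonneg hr])
  have hx' : x - (2 * r) • N ∈ K := hrK <| by
    rw [mem_closedBall, dist_eq_norm, show x - (2 * r) • N - (x - r • N) = -(r • N) by module]
    simp [norm_smul, hN, abs_of_nonneg hr]
  have := dist_le_diam_of_mem hK hx hx'
  rw [dist_eq_norm, sub_sub_cancel, norm_smul, hN, mul_one, Real.norm_of_nonneg (by positivity)]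
    at this
  linarith

theorem restrict_frontier_setOf_sSup_radius_lt_le [ProperSpace F] [MeasurableSpace F]
    [BorelSpace F] (hK : IsCompact K) (hKc : Convex ℝ K) {z : F} {ρ : ℝ}
    (hball : closedBall z ρ ⊆ K) {m : ℕ} (hfin : μH[m] (frontier K) ≠ ⊤) {N : F → F}
    (hN : ∀ᵐ x ∂(μH[m].restrict (frontier K)), ‖N x‖ = 1 ∧ ∀ y ∈ K, ⟪y - x, N x⟫ ≤ 0)
    (ht : 0 < t) (htρ : t < ρ) :
    μH[m].restrict (frontier K) {x | sSup {r : ℝ | 0 ≤ r ∧ closedBall (x - r • N x) r ⊆ K} < t}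
      ≤ ENNReal.ofReal (m / ρ) * μH[m] (frontier K) * ENNReal.ofReal t := by
  calc _ ≤ μH[m].restrict (frontier K) (cthickening t (innerParallelBody K t))ᶜ := by
        refine measure_mono_ae ?_
        filter_upwards [hN, ae_restrict_mem isClosed_frontier.measurableSet]
          with x ⟨hN1, hNK⟩ hx hlt hmem
        exact not_le.2 hlt <| le_sSup_of_closedBall_sub_smul_subset hK.isBounded hN1 ht.le <|
          closedBall_sub_smul_subset_of_mem_cthickening hK hx.2 hN1 hNK ht.le hmem
    _ = μH[m] (frontier K \ cthickening t (innerParallelBody K t)) := by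
        rw [Measure.restrict_apply isClosed_cthickening.measurableSet.compl, inter_comm,
          sdiff_eq]
    _ ≤ ENNReal.ofReal (m * (t / ρ)) * μH[m] (frontier K) :=
        hausdorffMeasure_frontier_diff_cthickening_le hK hKc hball ht htρ hfin
    _ = _ := by
        rw [show (m : ℝ) * (t / ρ) = m / ρ * t by ring,
          ENNReal.ofReal_mul (div_nonneg m.cast_nonneg (ht.trans htρ).le), mul_right_comm]

end InnerProductSpace

end InnerParallelBody

/-- Let `K ⊂ ℝ^d` be a convex body, `N` an outer unit normal field on `∂K` (defined a.e.
w.r.t. the surface measure), and `r(x)` the largest radius `r ≥ 0` with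
`B(x - rN(x), r) ⊆ K`. Then for every `α ∈ (0,1)`, `∫_{∂K} r(x)^{-α} dμ(x) < ∞`. -/
theorem stmt_3 (d : ℕ) (K : Set (EuclideanSpace ℝ (Fin d)))
    (hK : IsCompact K) (hKc : Convex ℝ K) (hKi : (interior K).Nonempty)
    (N : EuclideanSpace ℝ (Fin d) → EuclideanSpace ℝ (Fin d))
    (hN : ∀ᵐ x ∂((μH[((d : ℝ) - 1)] : Measure (EuclideanSpace ℝ (Fin d))).restrict
        (frontier K)),
      ‖N x‖ = 1 ∧ ∀ y ∈ K, (inner ℝ (y - x) (N x) : ℝ) ≤ 0)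
    (rK : EuclideanSpace ℝ (Fin d) → ℝ)
    (hr : ∀ x, rK x = sSup {r : ℝ | 0 ≤ r ∧ Metric.closedBall (x - r • N x) r ⊆ K})
    (α : ℝ) (hα : α ∈ Set.Ioo (0 : ℝ) 1) :
    ∫⁻ x in frontier K, (ENNReal.ofReal (rK x)) ^ (-α)
        ∂(μH[((d : ℝ) - 1)] : Measure (EuclideanSpace ℝ (Fin d))) < ⊤ := by
  rcases d with _ | m
  · simp
  have hdim : ((m + 1 : ℕ) : ℝ) - 1 = m := by push_cast; ring
  rw [hdim] at hN ⊢
  obtain ⟨z, hz⟩ := hKi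
  obtain ⟨ρ, hρ, hball⟩ := Metric.isOpen_iff.1 isOpen_interior z hz
  have hball' : closedBall z (ρ / 2) ⊆ K :=
    (closedBall_subset_ball (half_lt_self hρ)).trans (hball.trans interior_subset)
  have hfin := hausdorffMeasure_frontier_lt_top hK.isBounded hKc hK.isClosed ⟨z, hz⟩
  have : IsFiniteMeasure (μH[m].restrict (frontier K)) := ⟨by simpa using hfin⟩
  refine lintegral_ofReal_rpow_neg_lt_top hα.1.le hα.2 (T := ρ / 4)
    (C := ENNReal.ofReal (m / (ρ / 2)) * μH[m] (frontier K)) (by positivity)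
    (ENNReal.mul_ne_top ENNReal.ofReal_ne_top hfin.ne) fun t ht => ?_
  simp only [hr]
  exact restrict_frontier_setOf_sSup_radius_lt_le hK hKc hball' hfin.ne hN ht.1 (by linarith [ht.2])
end

section
/- For every d ≥ 2, lim_{n→∞} n^{2/(d+1)} ∫_{(log n)/n}^{1} Σ_{i=0}^{d-1} C(n,i) s^{i - (d-1)/(d+1)} (1-s)^{n-i} ds = 0. -/
open Filter



lemma term_bound5 (d n i : ℕ) (hd : 2 ≤ d) (hi : i < d) (hnd : d ≤ n)
    {s : ℝ} (hs0 : 0 < s) (hs1 : s ≤ 1) (hns : 1 ≤ (n : ℝ) * s) :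
    (n.choose i : ℝ) * s ^ ((i : ℝ) - ((d : ℝ) - 1) / ((d : ℝ) + 1)) * (1 - s) ^ (n - i)
      ≤ Real.exp d * (Nat.factorial (d+1) : ℝ) * ((n : ℝ) ^ 2)⁻¹ *
        s ^ ((-2 : ℝ) - ((d : ℝ) - 1) / ((d : ℝ) + 1)) := by
  set α : ℝ := ((d : ℝ) - 1) / ((d : ℝ) + 1) with hα
  set P : ℝ := (n : ℝ) * s with hP
  set K : ℝ := (Nat.factorial (d+1) : ℝ) with hK
  have hK0 : (0 : ℝ) < K := by positivity
  have hP0 : (0 : ℝ) < P := lt_of_lt_of_le one_pos hns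
  have hn0 : (0 : ℝ) < n := by
    have : 0 < n := by omega
    positivity
  have hsα : (0 : ℝ) < s ^ (-α) := Real.rpow_pos_of_pos hs0 _
  have e1 : s ^ ((i : ℝ) - α) = s ^ i * s ^ (-α) := by
    rw [sub_eq_add_neg, Real.rpow_add hs0, Real.rpow_natCast]
  have e2 : s ^ ((-2 : ℝ) - α) = (s ^ 2)⁻¹ * s ^ (-α) := by
    rw [sub_eq_add_neg, Real.rpow_add hs0]
    congr 1
    rw [show ((-2 : ℝ)) = ((-2 : ℤ) : ℝ) by norm_num, Real.rpow_intCast]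
    simp [zpow_neg]
  rw [e1, e2]
  have h1 : (n.choose i : ℝ) ≤ (n : ℝ) ^ i := by exact_mod_cast Nat.choose_le_pow n i
  have h2 : (1 - s) ^ (n - i) ≤ Real.exp d * Real.exp (-P) := by
    calc (1 - s) ^ (n - i) ≤ Real.exp (-s) ^ (n - i) := by
          apply pow_le_pow_left₀ (by linarith)
          nlinarith [Real.add_one_le_exp (-s)]
      _ = Real.exp (-s * ((n - i : ℕ) : ℝ)) := by
          rw [← Real.exp_nat_mul]; ring_nf
      _ ≤ Real.exp d * Real.exp (-P) := by
          rw [← Real.exp_add]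
          apply Real.exp_le_exp.2
          have hin : i ≤ n := le_trans hi.le hnd
          have hcast : ((n - i : ℕ) : ℝ) = (n : ℝ) - i := by push_cast [hin]; ring
          have hid : (i : ℝ) ≤ d := by exact_mod_cast hi.le
          have hsi : s * (i : ℝ) ≤ (i : ℝ) := by
            nlinarith [Nat.cast_nonneg (α := ℝ) i]
          rw [hcast, hP]; nlinarith
  have h3 : Real.exp (-P) ≤ K / P ^ (d+1) := by
    have hb := Real.pow_div_factorial_le_exp (x := P) hP0.le (d+1)
    rw [Real.exp_neg]
    calc (Real.exp P)⁻¹ ≤ (P ^ (d+1) / K)⁻¹ := inv_anti₀ (by positivity) hb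
      _ = K / P ^ (d+1) := inv_div _ _
  have key : (n.choose i : ℝ) * s ^ i * (1 - s) ^ (n - i)
      ≤ Real.exp d * K * (P ^ 2)⁻¹ := by
    calc (n.choose i : ℝ) * s ^ i * (1 - s) ^ (n - i)
        ≤ (n : ℝ) ^ i * s ^ i * (Real.exp d * (K / P ^ (d+1))) := by
          apply mul_le_mul
          · exact mul_le_mul_of_nonneg_right h1 (pow_nonneg hs0.le i)
          · exact h2.trans (mul_le_mul_of_nonneg_left h3 (Real.exp_pos _).le)
          · exact pow_nonneg (by linarith) _
          · positivity
      _ = Real.exp d * K * (P ^ i / P ^ (d+1)) := by rw [hP, mul_pow]; ring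
      _ ≤ Real.exp d * K * (P ^ (d-1) / P ^ (d+1)) := by
          have : P ^ i ≤ P ^ (d-1) := pow_le_pow_right₀ hns (by omega)
          gcongr
      _ = Real.exp d * K * (P ^ 2)⁻¹ := by
          have hsplit : P ^ (d+1) = P ^ (d-1) * P ^ 2 := by rw [← pow_add]; congr 1; omega
          rw [hsplit, div_mul_cancel_left₀ (by positivity)]
  calc (n.choose i : ℝ) * (s ^ i * s ^ (-α)) * (1 - s) ^ (n - i)
      = (n.choose i : ℝ) * s ^ i * (1 - s) ^ (n - i) * s ^ (-α) := by ring
    _ ≤ Real.exp d * K * (P ^ 2)⁻¹ * s ^ (-α) :=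
        mul_le_mul_of_nonneg_right key hsα.le
    _ = Real.exp d * K * ((n : ℝ) ^ 2)⁻¹ * ((s ^ 2)⁻¹ * s ^ (-α)) := by
        rw [hP, mul_pow, mul_inv]; ring

lemma integral_bound5 (d : ℕ) (hd : 2 ≤ d) (n : ℕ) (hnd : d ≤ n) (hlog : 1 ≤ Real.log n) :
    (n : ℝ) ^ ((2 : ℝ) / ((d : ℝ) + 1)) *
      ∫ s in (Real.log n / n)..1,
        ∑ i ∈ Finset.range d,
          (n.choose i : ℝ) * s ^ ((i : ℝ) - ((d : ℝ) - 1) / ((d : ℝ) + 1)) * (1 - s) ^ (n - i)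
    ≤ (d : ℝ) * (Real.exp d * (Nat.factorial (d+1) : ℝ)) / Real.log n := by
  set α : ℝ := ((d : ℝ) - 1) / ((d : ℝ) + 1) with hα
  have hd1 : (0 : ℝ) < (d : ℝ) + 1 := by positivity
  have hα0 : 0 ≤ α := by
    apply div_nonneg _ hd1.le
    have : (2 : ℝ) ≤ d := by exact_mod_cast hd
    linarith
  have hn0 : (0 : ℝ) < n := by
    have : 0 < n := by omega
    positivity
  set a : ℝ := Real.log n / n with ha
  have ha0 : 0 < a := by positivity
  have ha1 : a ≤ 1 := by
    rw [ha, div_le_one hn0]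
    have := Real.log_le_sub_one_of_pos hn0
    linarith
  set E : ℝ := Real.exp d * (Nat.factorial (d+1) : ℝ) with hE
  have hE0 : 0 < E := by positivity
  -- continuity / integrability
  have hpos : ∀ x ∈ Set.Icc a 1, (0:ℝ) < x := fun x hx => lt_of_lt_of_le ha0 hx.1
  have hcf : ContinuousOn (fun s : ℝ => ∑ i ∈ Finset.range d,
      (n.choose i : ℝ) * s ^ ((i : ℝ) - α) * (1 - s) ^ (n - i)) (Set.Icc a 1) := by
    apply continuousOn_finset_sum
    intro i _
    apply ContinuousOn.mul
    · exact ContinuousOn.mul continuousOn_const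
        (ContinuousOn.rpow_const continuousOn_id
          (fun x hx => Or.inl (ne_of_gt (hpos x hx))))
    · exact ((continuous_const.sub continuous_id).pow _).continuousOn
  have hch : ContinuousOn (fun s : ℝ => (d : ℝ) * E * ((n : ℝ) ^ 2)⁻¹ *
      s ^ ((-2 : ℝ) - α)) (Set.Icc a 1) := by
    exact ContinuousOn.mul continuousOn_const
      (ContinuousOn.rpow_const continuousOn_id
        (fun x hx => Or.inl (ne_of_gt (hpos x hx))))
  have hfi := hcf.intervalIntegrable_of_Icc (μ := MeasureTheory.volume) ha1
  have hhi := hch.intervalIntegrable_of_Icc (μ := MeasureTheory.volume) ha1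
  -- pointwise bound
  have hpt : ∀ s ∈ Set.Icc a 1, (∑ i ∈ Finset.range d,
      (n.choose i : ℝ) * s ^ ((i : ℝ) - α) * (1 - s) ^ (n - i))
      ≤ (d : ℝ) * E * ((n : ℝ) ^ 2)⁻¹ * s ^ ((-2 : ℝ) - α) := by
    intro s hs
    have hs0 : 0 < s := hpos s hs
    have hns : 1 ≤ (n : ℝ) * s := by
      have h1 : Real.log n ≤ (n : ℝ) * s := by
        have h := hs.1
        rw [ha, div_le_iff₀ hn0] at h
        linarith
      linarith
    calc (∑ i ∈ Finset.range d,
        (n.choose i : ℝ) * s ^ ((i : ℝ) - α) * (1 - s) ^ (n - i))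
        ≤ ∑ _i ∈ Finset.range d, E * ((n : ℝ) ^ 2)⁻¹ * s ^ ((-2 : ℝ) - α) := by
          apply Finset.sum_le_sum
          intro i hi
          exact term_bound5 d n i hd (Finset.mem_range.1 hi) hnd hs0 hs.2 hns
      _ = (d : ℝ) * E * ((n : ℝ) ^ 2)⁻¹ * s ^ ((-2 : ℝ) - α) := by
          rw [Finset.sum_const, Finset.card_range]; simp; ring
  have hmono := intervalIntegral.integral_mono_on ha1 hfi hhi hpt
  -- compute the RHS integral
  have hrpow_int : ∫ s in a..1, s ^ ((-2 : ℝ) - α)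
      = (1 - a ^ ((-1 : ℝ) - α)) / ((-1 : ℝ) - α) := by
    rw [integral_rpow (Or.inr ⟨by intro h; linarith, by
      rw [Set.uIcc_of_le ha1]; intro h; exact absurd h.1 (not_le.2 ha0)⟩)]
    norm_num
    rw [show (-2 : ℝ) - α + 1 = -1 - α by ring]
  have hXge1 : 1 ≤ a ^ ((-1 : ℝ) - α) := by
    have := Real.rpow_le_rpow_of_exponent_ge ha0 ha1 (show (-1:ℝ) - α ≤ 0 by linarith)
    rwa [Real.rpow_zero] at this
  have hint_le : ∫ s in a..1, s ^ ((-2 : ℝ) - α) ≤ a ^ ((-1 : ℝ) - α) := by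
    rw [hrpow_int, div_le_iff_of_neg (by linarith : (-1:ℝ) - α < 0)]
    nlinarith
  have step1 : (n : ℝ) ^ ((2 : ℝ) / ((d : ℝ) + 1)) *
      ∫ s in a..1, ∑ i ∈ Finset.range d,
        (n.choose i : ℝ) * s ^ ((i : ℝ) - α) * (1 - s) ^ (n - i)
      ≤ (n : ℝ) ^ ((2 : ℝ) / ((d : ℝ) + 1)) * ((d : ℝ) * E * ((n : ℝ) ^ 2)⁻¹ * a ^ ((-1:ℝ) - α)) := by
    apply mul_le_mul_of_nonneg_left _ (Real.rpow_nonneg hn0.le _)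
    calc ∫ s in a..1, ∑ i ∈ Finset.range d,
          (n.choose i : ℝ) * s ^ ((i : ℝ) - α) * (1 - s) ^ (n - i)
        ≤ ∫ s in a..1, (d : ℝ) * E * ((n : ℝ) ^ 2)⁻¹ * s ^ ((-2 : ℝ) - α) := hmono
      _ = (d : ℝ) * E * ((n : ℝ) ^ 2)⁻¹ * ∫ s in a..1, s ^ ((-2 : ℝ) - α) := by
          rw [intervalIntegral.integral_const_mul]
      _ ≤ (d : ℝ) * E * ((n : ℝ) ^ 2)⁻¹ * (a ^ ((-1:ℝ) - α)) := by
          apply mul_le_mul_of_nonneg_left hint_le (by positivity)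
  refine step1.trans ?_
  -- now algebra: n^(2/(d+1)) * (d*E*(n^2)⁻¹ * a^(-1-α)) ≤ d*E/log n
  have hlog0 : (0 : ℝ) < Real.log n := by linarith
  have hafac : a ^ ((-1:ℝ) - α) = Real.log n ^ ((-1:ℝ) - α) * (n : ℝ) ^ ((1:ℝ) + α) := by
    rw [ha, Real.div_rpow hlog0.le hn0.le, div_eq_mul_inv, ← Real.rpow_neg hn0.le]
    ring_nf
  have hn2 : ((n : ℝ) ^ 2)⁻¹ = (n : ℝ) ^ ((-2 : ℝ)) := by
    rw [show ((-2 : ℝ)) = ((-2 : ℤ) : ℝ) by norm_num, Real.rpow_intCast]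
    simp [zpow_neg]
  have hexp : (n : ℝ) ^ ((2 : ℝ) / ((d : ℝ) + 1)) * (n : ℝ) ^ ((-2 : ℝ)) * (n : ℝ) ^ ((1:ℝ) + α) = 1 := by
    rw [← Real.rpow_add hn0, ← Real.rpow_add hn0]
    rw [show (2 : ℝ) / ((d : ℝ) + 1) + (-2) + (1 + α) = 0 by
      rw [hα]; field_simp; ring]
    exact Real.rpow_zero _
  have hlogfac : Real.log n ^ ((-1:ℝ) - α) ≤ (Real.log n)⁻¹ := by
    have := Real.rpow_le_rpow_of_exponent_le hlog (show (-1:ℝ) - α ≤ -1 by linarith)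
    rwa [Real.rpow_neg_one] at this
  calc (n : ℝ) ^ ((2 : ℝ) / ((d : ℝ) + 1)) * ((d : ℝ) * E * ((n : ℝ) ^ 2)⁻¹ * a ^ ((-1:ℝ) - α))
      = (d : ℝ) * E * Real.log n ^ ((-1:ℝ) - α) *
        ((n : ℝ) ^ ((2 : ℝ) / ((d : ℝ) + 1)) * (n : ℝ) ^ ((-2 : ℝ)) * (n : ℝ) ^ ((1:ℝ) + α)) := by
        rw [hafac, hn2]; ring
    _ = (d : ℝ) * E * Real.log n ^ ((-1:ℝ) - α) := by rw [hexp, mul_one]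
    _ ≤ (d : ℝ) * E * (Real.log n)⁻¹ := by
        apply mul_le_mul_of_nonneg_left hlogfac (by positivity)
    _ = (d : ℝ) * E / Real.log n := by rw [div_eq_mul_inv]
/-- For every `d ≥ 2`,
`lim_{n→∞} n^{2/(d+1)} ∫_{(log n)/n}^{1} Σ_{i=0}^{d-1} C(n,i) s^{i-(d-1)/(d+1)} (1-s)^{n-i} ds = 0`. -/
theorem stmt_5 (d : ℕ) (hd : 2 ≤ d) :
    Tendsto
      (fun n : ℕ =>
        (n : ℝ) ^ ((2 : ℝ) / ((d : ℝ) + 1)) *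
          ∫ s in (Real.log n / n)..1,
            ∑ i ∈ Finset.range d,
              (n.choose i : ℝ) * s ^ ((i : ℝ) - ((d : ℝ) - 1) / ((d : ℝ) + 1)) *
                (1 - s) ^ (n - i))
      atTop (nhds 0) := by
  have hlogtop : Tendsto (fun n : ℕ => Real.log n) atTop atTop :=
    Real.tendsto_log_atTop.comp tendsto_natCast_atTop_atTop
  have hev : ∀ᶠ n : ℕ in atTop, 1 ≤ Real.log n := hlogtop.eventually_ge_atTop 1
  apply squeeze_zero'
  · filter_upwards [hev, eventually_ge_atTop 1] with n hlog hn1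
    have hn0 : (0 : ℝ) < n := by exact_mod_cast hn1
    have ha0 : (0 : ℝ) ≤ Real.log n / n := by positivity
    have ha1 : Real.log n / n ≤ 1 := by
      rw [div_le_one hn0]
      have := Real.log_le_sub_one_of_pos hn0
      linarith
    apply mul_nonneg (Real.rpow_nonneg hn0.le _)
    apply intervalIntegral.integral_nonneg ha1
    intro s hs
    apply Finset.sum_nonneg
    intro i _
    apply mul_nonneg (mul_nonneg (by positivity) (Real.rpow_nonneg (le_trans ha0 hs.1) _))
    apply pow_nonneg
    have := hs.2
    linarith
  · filter_upwards [hev, eventually_ge_atTop d] with n hlog hnd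
    exact integral_bound5 d hd n hnd hlog
  · exact Tendsto.const_div_atTop hlogtop _
end

section
/- For every d ≥ 2 and every fixed i with 0 ≤ i ≤ d-1, the sequence n^{2/(d+1)} · C(n,i) · Γ(i+1-(d-1)/(d+1)) · Γ(n+1-i) / Γ(n+2-(d-1)/(d+1)) is bounded uniformly in n; consequently n^{2/(d+1)} Σ_{i=0}^{d-1} C(n,i) ∫_0^1 s^{i-(d-1)/(d+1)}(1-s)^{n-i} ds is bounded uniformly in n. -/
open Real

lemma aux_gautschi {α : ℝ} (h0 : 0 < α) (h1 : α < 1) (n : ℕ) :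
    (n : ℝ) ^ (1 - α) * Real.Gamma ((n : ℝ) + 1) ≤ Real.Gamma ((n : ℝ) + 2 - α) := by
  have hn : (0:ℝ) ≤ n := Nat.cast_nonneg n
  have hx : (0:ℝ) < (n:ℝ) + 2 - α := by linarith
  have hy : (0:ℝ) < (n:ℝ) + 1 - α := by linarith
  have key := Real.Gamma_mul_add_mul_le_rpow_Gamma_mul_rpow_Gamma hx hy h0
    (by linarith : (0:ℝ) < 1 - α) (by ring)
  have hcomb : α * ((n:ℝ) + 2 - α) + (1 - α) * ((n:ℝ) + 1 - α) = (n:ℝ) + 1 := by ring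
  rw [hcomb] at key
  have hΓy : 0 < Real.Gamma ((n:ℝ) + 1 - α) := Real.Gamma_pos_of_pos hy
  have hΓx : 0 < Real.Gamma ((n:ℝ) + 2 - α) := Real.Gamma_pos_of_pos hx
  have hrec : Real.Gamma ((n:ℝ) + 2 - α) = ((n:ℝ) + 1 - α) * Real.Gamma ((n:ℝ) + 1 - α) := by
    have := Real.Gamma_add_one (ne_of_gt hy)
    rw [show (n:ℝ) + 1 - α + 1 = (n:ℝ) + 2 - α by ring] at this
    exact this
  calc (n : ℝ) ^ (1 - α) * Real.Gamma ((n : ℝ) + 1)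
      ≤ (n : ℝ) ^ (1 - α) * (Real.Gamma ((n:ℝ) + 2 - α) ^ α *
          Real.Gamma ((n:ℝ) + 1 - α) ^ (1 - α)) :=
        mul_le_mul_of_nonneg_left key (Real.rpow_nonneg hn _)
    _ = Real.Gamma ((n:ℝ) + 2 - α) ^ α * ((n:ℝ) * Real.Gamma ((n:ℝ) + 1 - α)) ^ (1 - α) := by
        rw [Real.mul_rpow hn hΓy.le]; ring
    _ ≤ Real.Gamma ((n:ℝ) + 2 - α) ^ α * (((n:ℝ) + 1 - α) * Real.Gamma ((n:ℝ) + 1 - α)) ^ (1 - α) := by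
        apply mul_le_mul_of_nonneg_left _ (Real.rpow_nonneg hΓx.le _)
        apply Real.rpow_le_rpow (by positivity) _ (by linarith)
        apply mul_le_mul_of_nonneg_right (by linarith) hΓy.le
    _ = Real.Gamma ((n:ℝ) + 2 - α) ^ α * Real.Gamma ((n:ℝ) + 2 - α) ^ (1 - α) := by
        rw [← hrec]
    _ = Real.Gamma ((n:ℝ) + 2 - α) := by
        rw [← Real.rpow_add hΓx]; norm_num

lemma aux_beta {r : ℝ} (hr : -1 < r) (m : ℕ) :
    (∫ s in (0:ℝ)..1, s ^ r * (1 - s) ^ m)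
      = Real.Gamma (r + 1) * Real.Gamma ((m : ℝ) + 1) / Real.Gamma (r + (m : ℝ) + 2) := by
  have hs : 0 < ((r:ℂ) + 1).re := by simp; linarith
  have ht : 0 < ((m:ℂ) + 1).re := by simp; positivity
  have h := Complex.Gamma_mul_Gamma_eq_betaIntegral hs ht
  have hbeta : Complex.betaIntegral ((r:ℂ) + 1) ((m:ℂ) + 1)
      = ((∫ s in (0:ℝ)..1, s ^ r * (1 - s) ^ m : ℝ) : ℂ) := by
    rw [Complex.betaIntegral, ← intervalIntegral.integral_ofReal]
    apply intervalIntegral.integral_congr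
    intro x hx
    rw [Set.uIcc_of_le (by norm_num : (0:ℝ) ≤ 1)] at hx
    have hx0 : (0:ℝ) ≤ x := hx.1
    simp only [add_sub_cancel_right]
    rw [Complex.ofReal_mul, Complex.ofReal_cpow hx0, Complex.ofReal_pow]
    push_cast
    rw [Complex.cpow_natCast]
  rw [hbeta] at h
  have hgam1 : Complex.Gamma ((r:ℂ) + 1) = ((Real.Gamma (r + 1) : ℝ) : ℂ) := by
    rw [← Complex.Gamma_ofReal]; push_cast; ring_nf
  have hgam2 : Complex.Gamma ((m:ℂ) + 1) = ((Real.Gamma ((m:ℝ) + 1) : ℝ) : ℂ) := by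
    rw [← Complex.Gamma_ofReal]; push_cast; ring_nf
  have hgam3 : Complex.Gamma ((r:ℂ) + 1 + ((m:ℂ) + 1)) = ((Real.Gamma (r + (m:ℝ) + 2) : ℝ) : ℂ) := by
    rw [← Complex.Gamma_ofReal]; push_cast; ring_nf
  rw [hgam1, hgam2, hgam3, ← Complex.ofReal_mul, ← Complex.ofReal_mul] at h
  have hre : Real.Gamma (r + 1) * Real.Gamma ((m:ℝ) + 1)
      = Real.Gamma (r + (m:ℝ) + 2) * ∫ s in (0:ℝ)..1, s ^ r * (1 - s) ^ m :=
    Complex.ofReal_injective h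
  have hpos : 0 < Real.Gamma (r + (m:ℝ) + 2) := Real.Gamma_pos_of_pos (by have : (0:ℝ) ≤ (m:ℝ) := Nat.cast_nonneg m; linarith)
  rw [eq_div_iff (ne_of_gt hpos)]
  linarith [hre]

/-- For every `d ≥ 2` and fixed `0 ≤ i ≤ d-1`, the sequence
`n^{2/(d+1)} · C(n,i) · Γ(i+1-(d-1)/(d+1)) · Γ(n+1-i) / Γ(n+2-(d-1)/(d+1))` is bounded
uniformly in `n`; consequently
`n^{2/(d+1)} Σ_{i=0}^{d-1} C(n,i) ∫_0^1 s^{i-(d-1)/(d+1)}(1-s)^{n-i} ds` is bounded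
uniformly in `n`. -/
theorem stmt_6 (d : ℕ) (hd : 2 ≤ d) :
    (∀ i : ℕ, i ≤ d - 1 →
      ∃ C : ℝ, ∀ n : ℕ,
        (n : ℝ) ^ ((2 : ℝ) / ((d : ℝ) + 1)) * (n.choose i : ℝ) *
            Real.Gamma ((i : ℝ) + 1 - ((d : ℝ) - 1) / ((d : ℝ) + 1)) *
            Real.Gamma ((n : ℝ) + 1 - (i : ℝ)) /
            Real.Gamma ((n : ℝ) + 2 - ((d : ℝ) - 1) / ((d : ℝ) + 1)) ≤ C) ∧
    ∃ C : ℝ, ∀ n : ℕ,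
      (n : ℝ) ^ ((2 : ℝ) / ((d : ℝ) + 1)) *
          ∑ i ∈ Finset.range d,
            (n.choose i : ℝ) *
              ∫ s in (0 : ℝ)..1,
                s ^ ((i : ℝ) - ((d : ℝ) - 1) / ((d : ℝ) + 1)) * (1 - s) ^ (n - i) ≤ C := by
  have hd1 : (2:ℝ) ≤ (d:ℝ) := by exact_mod_cast hd
  set α : ℝ := ((d : ℝ) - 1) / ((d : ℝ) + 1) with hα
  have hden : (0:ℝ) < (d:ℝ) + 1 := by linarith
  have hα0 : 0 < α := by apply div_pos <;> linarith
  have hα1 : α < 1 := by rw [hα, div_lt_one hden]; linarith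
  have hexp : (2 : ℝ) / ((d : ℝ) + 1) = 1 - α := by
    rw [hα]; field_simp; ring
  -- the key uniform bound per index i
  have key : ∀ i n : ℕ,
      (n : ℝ) ^ ((2 : ℝ) / ((d : ℝ) + 1)) * (n.choose i : ℝ) *
          Real.Gamma ((i : ℝ) + 1 - α) * Real.Gamma ((n : ℝ) + 1 - (i : ℝ)) /
          Real.Gamma ((n : ℝ) + 2 - α)
        ≤ Real.Gamma ((i : ℝ) + 1 - α) / (Nat.factorial i : ℝ) := by
    intro i n
    have hΓi : 0 < Real.Gamma ((i : ℝ) + 1 - α) :=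
      Real.Gamma_pos_of_pos (by have : (0:ℝ) ≤ i := Nat.cast_nonneg i; linarith)
    have hfac : (0:ℝ) < (Nat.factorial i : ℝ) := by exact_mod_cast Nat.factorial_pos i
    rcases lt_or_ge n i with hni | hni
    · rw [Nat.choose_eq_zero_of_lt hni]
      simp only [Nat.cast_zero, mul_zero, zero_mul, zero_div]
      positivity
    · -- n ≥ i
      have hΓd : 0 < Real.Gamma ((n : ℝ) + 2 - α) :=
        Real.Gamma_pos_of_pos (by have : (0:ℝ) ≤ n := Nat.cast_nonneg n; linarith)
      have hcast : (n : ℝ) + 1 - (i : ℝ) = ((n - i : ℕ) : ℝ) + 1 := by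
        have := Nat.cast_sub hni (R := ℝ); rw [this]; ring
      have hΓni : Real.Gamma ((n : ℝ) + 1 - (i : ℝ)) = (Nat.factorial (n - i) : ℝ) := by
        rw [hcast]
        exact_mod_cast Real.Gamma_nat_eq_factorial (n - i)
      have hΓn : Real.Gamma ((n : ℝ) + 1) = (Nat.factorial n : ℝ) := by
        exact_mod_cast Real.Gamma_nat_eq_factorial n
      have hchoose : (n.choose i : ℝ) * (Nat.factorial (n - i) : ℝ) * (Nat.factorial i : ℝ)
          = (Nat.factorial n : ℝ) := by
        rw [mul_right_comm]
        exact_mod_cast congrArg (Nat.cast (R := ℝ))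
          (Nat.choose_mul_factorial_mul_factorial hni)
      rw [hΓni, div_le_div_iff₀ hΓd hfac, hexp]
      have hg := aux_gautschi hα0 hα1 n
      rw [hΓn] at hg
      have hrn : (0:ℝ) ≤ (n:ℝ) ^ (1 - α) := Real.rpow_nonneg (Nat.cast_nonneg n) _
      calc (n : ℝ) ^ (1 - α) * (n.choose i : ℝ) * Real.Gamma ((i : ℝ) + 1 - α) *
              (Nat.factorial (n - i) : ℝ) * (Nat.factorial i : ℝ)
          = Real.Gamma ((i : ℝ) + 1 - α) * ((n : ℝ) ^ (1 - α) * (Nat.factorial n : ℝ)) := by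
            rw [← hchoose]; ring
        _ ≤ Real.Gamma ((i : ℝ) + 1 - α) * Real.Gamma ((n : ℝ) + 2 - α) :=
            mul_le_mul_of_nonneg_left hg hΓi.le
        _ = Real.Gamma ((i : ℝ) + 1 - α) * Real.Gamma ((n : ℝ) + 2 - α) := rfl
  constructor
  · intro i _
    exact ⟨Real.Gamma ((i : ℝ) + 1 - α) / (Nat.factorial i : ℝ), fun n => key i n⟩
  · refine ⟨∑ i ∈ Finset.range d, Real.Gamma ((i : ℝ) + 1 - α) / (Nat.factorial i : ℝ), fun n => ?_⟩
    rw [Finset.mul_sum]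
    apply Finset.sum_le_sum
    intro i _
    rcases lt_or_ge n i with hni | hni
    · rw [Nat.choose_eq_zero_of_lt hni]
      simp only [Nat.cast_zero, zero_mul, mul_zero]
      have hΓi : 0 < Real.Gamma ((i : ℝ) + 1 - α) :=
        Real.Gamma_pos_of_pos (by have : (0:ℝ) ≤ i := Nat.cast_nonneg i; linarith)
      positivity
    · have hr : -1 < (i : ℝ) - α := by
        have : (0:ℝ) ≤ i := Nat.cast_nonneg i; linarith
      have hint := aux_beta hr (n - i)
      have hc1 : (i : ℝ) - α + 1 = (i : ℝ) + 1 - α := by ring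
      have hc2 : ((n - i : ℕ) : ℝ) + 1 = (n : ℝ) + 1 - (i : ℝ) := by
        rw [Nat.cast_sub hni]; ring
      have hc3 : (i : ℝ) - α + ((n - i : ℕ) : ℝ) + 2 = (n : ℝ) + 2 - α := by
        rw [Nat.cast_sub hni]; ring
      rw [hc1, hc2, hc3] at hint
      calc (n : ℝ) ^ ((2 : ℝ) / ((d : ℝ) + 1)) *
              ((n.choose i : ℝ) * ∫ s in (0:ℝ)..1, s ^ ((i : ℝ) - α) * (1 - s) ^ (n - i))
          = (n : ℝ) ^ ((2 : ℝ) / ((d : ℝ) + 1)) * (n.choose i : ℝ) *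
              Real.Gamma ((i : ℝ) + 1 - α) * Real.Gamma ((n : ℝ) + 1 - (i : ℝ)) /
              Real.Gamma ((n : ℝ) + 2 - α) := by
            rw [hint]; ring
        _ ≤ Real.Gamma ((i : ℝ) + 1 - α) / (Nat.factorial i : ℝ) := key i n
end

section
/- Let K be a convex body in R^d and x ∈ ∂K a point where ∂K is twice differentiable in the generalized sense. With K_T (the point where vol_d((-y+K)∩(y-K)) is maximal) at the origin and x_t = ∂K_t ∩ [0,x], one has lim_{t→0} ⟨x, N(x)⟩ / ⟨x_t, N(x_t)⟩ = 1. -/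
/-!
For small `t` the bodies `K_t` exhaust the interior of `K`: `K_t` contains every `y` with
`B(y, ε) ⊆ K` as soon as `t ≤ vol B(0, ε)`, so every compact subset of `int K` lies in
`int K_t` for small `t`. As `K_T = 0` is interior to `K`, every point of `[0, x)` is, so the
boundary points `x_t` of `K_t` on `[0, x]` tend to `x`, and every cluster point of the normals
`N(x_t)` is an outer unit normal of `K` at `x`. Near `x`, `∂K` is the graph of a convex `f` whose
generalized second differential bounds its subgradients, so `f(u) = O(|u|²)`; the tangent
hyperplane at `x` is then unique, hence so is the outer normal, and `N(x_t) → N(x)`. Thus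
`⟨x_t, N(x_t)⟩ → ⟨x, N(x)⟩`, which is positive because `0 ∈ int K`.
-/

open MeasureTheory

/-- `v` is a subgradient of `f` at `x`. -/
def SubgradAt {m : ℕ} (f : EuclideanSpace ℝ (Fin m) → ℝ) (x v : EuclideanSpace ℝ (Fin m)) :
    Prop :=
  ∀ y, f x + (inner ℝ v (y - x) : ℝ) ≤ f y

/-- `f` (with `f 0 = 0` and `0` a subgradient at `0`) is twice differentiable in the
generalized sense at `0` with generalized second differential `A`. -/
def HasGenSecondDerivAtZero {m : ℕ} (f : EuclideanSpace ℝ (Fin m) → ℝ)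
    (A : EuclideanSpace ℝ (Fin m) →L[ℝ] EuclideanSpace ℝ (Fin m)) : Prop :=
  ∃ Θ : ℝ → ℝ, Monotone Θ ∧ Θ 0 = 0 ∧
    Filter.Tendsto Θ (nhdsWithin 0 (Set.Ioi 0)) (nhds 0) ∧
    ∃ U ∈ nhds (0 : EuclideanSpace ℝ (Fin m)),
      ∀ x ∈ U, ∀ v, SubgradAt f x v → ‖v - A x‖ ≤ Θ ‖x‖ * ‖x‖

open Set Filter Topology Metric Asymptotics
open scoped RealInnerProductSpace

theorem ConvexOn.exists_forall_add_le {E : Type*} [NormedAddCommGroup E] [NormedSpace ℝ E]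
    {f : E → ℝ} (hf : ConvexOn ℝ univ f) (hfc : Continuous f) (u : E) :
    ∃ φ : StrongDual ℝ E, ∀ y, f u + φ (y - u) ≤ f y := by
  -- separate `(u, f u)` from the open strict epigraph; the vertical part `c` of the separating
  -- functional is negative, and the functional rescaled by `-c` is a subgradient
  have hS : IsOpen {p : E × ℝ | f p.1 < p.2} := isOpen_lt (hfc.comp continuous_fst) continuous_snd
  obtain ⟨ℓ, hℓ⟩ := geometric_hahn_banach_open_point (x := (u, f u))
    (by simpa using hf.convex_strict_epigraph) hS (lt_irrefl (f u))
  set φ := ℓ.comp (ContinuousLinearMap.inl ℝ E ℝ)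
  set c := ℓ (0, 1)
  have hℓ_apply : ∀ w r, ℓ (w, r) = φ w + r * c := fun w r => by
    rw [show (w, r) = (w, 0) + r • ((0 : E), (1 : ℝ)) by simp, map_add, map_smul, smul_eq_mul]
    rfl
  have hlt : ∀ w, ∀ r, f w < r → φ w + r * c < φ u + f u * c := fun w r hr => by
    simpa [hℓ_apply] using hℓ (w, r) hr
  have hc : c < 0 := by linarith [hlt u (f u + 1) (lt_add_one _)]
  have hle : ∀ w, φ w + f w * c ≤ φ u + f u * c := fun w =>
    le_of_tendsto (((continuous_const.add (continuous_id.mul continuous_const)).tendsto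
      (f w)).mono_left (nhdsWithin_le_nhds (s := Ioi (f w))))
      (eventually_nhdsWithin_of_forall fun r hr => (hlt w r hr).le)
  refine ⟨(-c)⁻¹ • φ, fun y => ?_⟩
  have hdiv : (φ y - φ u) / -c ≤ f y - f u := by
    rw [div_le_iff₀ (by linarith)]
    linarith [hle y]
  rw [smul_apply, map_sub, smul_eq_mul, inv_mul_eq_div]
  linarith

theorem ConvexOn.exists_subgradAt {m : ℕ} {f : EuclideanSpace ℝ (Fin m) → ℝ}
    (hf : ConvexOn ℝ univ f) (u : EuclideanSpace ℝ (Fin m)) : ∃ v, SubgradAt f u v := by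
  obtain ⟨φ, hφ⟩ := hf.exists_forall_add_le (continuousOn_univ.1 (hf.continuousOn isOpen_univ)) u
  exact ⟨(InnerProductSpace.toDual ℝ _).symm φ, fun y => by simpa using hφ y⟩

namespace HasGenSecondDerivAtZero

variable {m : ℕ} {f : EuclideanSpace ℝ (Fin m) → ℝ}
  {A : EuclideanSpace ℝ (Fin m) →L[ℝ] EuclideanSpace ℝ (Fin m)}

theorem isBigO_norm_sq (hA : HasGenSecondDerivAtZero f A) (hf : ConvexOn ℝ univ f)
    (hf0 : f 0 = 0) (hdf0 : SubgradAt f 0 0) : f =O[𝓝 0] fun u => ‖u‖ ^ 2 := by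
  obtain ⟨Θ, hΘ, -, -, U, hU, hsub⟩ := hA
  refine IsBigO.of_bound (‖A‖ + Θ 1) ?_
  filter_upwards [hU, Metric.closedBall_mem_nhds (0 : EuclideanSpace ℝ (Fin m)) one_pos]
    with u huU hu1
  obtain ⟨v, hv⟩ := hf.exists_subgradAt u
  have hfu_nonneg : 0 ≤ f u := by simpa [hf0] using hdf0 u
  have hfu_le : f u ≤ ⟪v, u⟫ := by simpa [hf0] using hv 0
  have hv_le : ‖v‖ ≤ (‖A‖ + Θ 1) * ‖u‖ := calc
    ‖v‖ ≤ ‖A u‖ + ‖v - A u‖ := norm_le_norm_add_norm_sub' v (A u)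
    _ ≤ ‖A‖ * ‖u‖ + Θ ‖u‖ * ‖u‖ := add_le_add (A.le_opNorm u) (hsub u huU v hv)
    _ = (‖A‖ + Θ ‖u‖) * ‖u‖ := by ring
    _ ≤ (‖A‖ + Θ 1) * ‖u‖ := by gcongr; exact hΘ (mem_closedBall_zero_iff.1 hu1)
  calc ‖f u‖ = f u := Real.norm_of_nonneg hfu_nonneg
    _ ≤ ‖v‖ * ‖u‖ := hfu_le.trans (real_inner_le_norm v u)
    _ ≤ (‖A‖ + Θ 1) * ‖u‖ * ‖u‖ := by gcongr
    _ = (‖A‖ + Θ 1) * ‖‖u‖ ^ 2‖ := by rw [Real.norm_of_nonneg (by positivity)]; ring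

theorem hasFDerivAt_zero (hA : HasGenSecondDerivAtZero f A) (hf : ConvexOn ℝ univ f)
    (hf0 : f 0 = 0) (hdf0 : SubgradAt f 0 0) : HasFDerivAt f (0 : _ →L[ℝ] ℝ) 0 := by
  rw [hasFDerivAt_iff_isLittleO_nhds_zero]
  simpa [hf0] using (hA.isBigO_norm_sq hf hf0 hdf0).trans_isLittleO
    (isLittleO_norm_pow_id one_lt_two)

end HasGenSecondDerivAtZero

theorem tendsto_smul_const_nhdsGT_zero {F : Type*} [NormedAddCommGroup F] [NormedSpace ℝ F]
    (v : F) : Tendsto (fun τ : ℝ => τ • v) (𝓝[>] 0) (𝓝 0) := by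
  simpa using ((tendsto_id (x := 𝓝 (0 : ℝ))).mono_left nhdsWithin_le_nhds).smul_const v

section EpigraphNormal

variable {E F : Type*} [NormedAddCommGroup E] [InnerProductSpace ℝ E]
  [NormedAddCommGroup F] [NormedSpace ℝ F] {P : E →ₗ[ℝ] F} {e : E} {f : F → ℝ} {S V : Set E}
  {n : E}

theorem inner_nonpos_of_epigraph_subset (hPe : P e = 0) (hf0 : f 0 = 0) (hV : V ∈ 𝓝 0)
    (hSV : {z ∈ V | f (P z) ≤ ⟪z, e⟫} ⊆ S) (hnS : ∀ w ∈ S, ⟪w, n⟫ ≤ 0) : ⟪e, n⟫ ≤ 0 := by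
  obtain ⟨τ, hτV, hτ⟩ :=
    (((tendsto_smul_const_nhdsGT_zero e).eventually hV).and self_mem_nhdsWithin).exists
  have hmem : τ • e ∈ S := hSV ⟨hτV, by
    rw [map_smul, hPe, smul_zero, hf0, real_inner_smul_left]
    exact mul_nonneg hτ.le real_inner_self_nonneg⟩
  have := hnS _ hmem
  rw [real_inner_smul_left] at this
  exact nonpos_of_mul_nonpos_right this hτ

/-- Testing `n` against the points `τ p + f (τ P p) e` of the epigraph, where `p` is the
component of `n` orthogonal to `e`, gives `τ ‖p‖² ≤ o(τ)`. -/
theorem eq_inner_smul_of_epigraph_subset (he : ‖e‖ = 1) (hPe : P e = 0)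
    (hf : HasFDerivAt f (0 : F →L[ℝ] ℝ) 0) (hf0 : f 0 = 0) (hV : V ∈ 𝓝 0)
    (hSV : {z ∈ V | f (P z) ≤ ⟪z, e⟫} ⊆ S) (hnS : ∀ w ∈ S, ⟪w, n⟫ ≤ 0) : n = ⟪e, n⟫ • e := by
  have hee : ⟪e, e⟫ = 1 := by rw [real_inner_self_eq_norm_sq, he, one_pow]
  set p := n - ⟪e, n⟫ • e
  have hpe : ⟪p, e⟫ = 0 := by
    rw [inner_sub_left, real_inner_smul_left, hee, real_inner_comm, mul_one, sub_self]
  have hpn : ⟪p, n⟫ = ‖p‖ ^ 2 := by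
    rw [← real_inner_self_eq_norm_sq, inner_sub_right p n, real_inner_smul_right, hpe,
      mul_zero, sub_zero]
  set z : ℝ → E := fun τ => τ • p + f (τ • P p) • e
  have hslope : Tendsto (fun τ : ℝ => τ⁻¹ * f (τ • P p)) (𝓝[>] 0) (𝓝 0) := by
    simpa [hf0] using (hf.hasLineDerivAt (P p)).tendsto_slope_zero_right
  have hz : Tendsto z (𝓝[>] 0) (𝓝 0) := by
    have hf_tendsto : Tendsto (fun τ : ℝ => f (τ • P p)) (𝓝[>] 0) (𝓝 0) := by
      have := hf.continuousAt.tendsto.comp (tendsto_smul_const_nhdsGT_zero (P p))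
      rwa [hf0] at this
    simpa using (tendsto_smul_const_nhdsGT_zero p).add (hf_tendsto.smul_const e)
  have hzS : ∀ᶠ τ in 𝓝[>] 0, z τ ∈ S := (hz.eventually hV).mono fun τ hτV => hSV ⟨hτV, by
    simp only [z, map_add, map_smul, hPe, smul_zero, add_zero, inner_add_left,
      real_inner_smul_left, hpe, hee, mul_zero, zero_add, mul_one, le_refl]⟩
  have hp : ‖p‖ ^ 2 ≤ 0 := by
    refine le_of_tendsto (f := fun τ => τ⁻¹ * ⟪z τ, n⟫) (x := 𝓝[>] 0) ?_ ?_
    · have := (tendsto_const_nhds (x := ‖p‖ ^ 2)).add (hslope.mul_const ⟪e, n⟫)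
      rw [zero_mul, add_zero] at this
      refine this.congr' (eventually_nhdsWithin_of_forall fun τ (hτ : 0 < τ) => ?_)
      simp only [z, inner_add_left, real_inner_smul_left, hpn]
      field_simp
    · filter_upwards [hzS, self_mem_nhdsWithin] with τ hτS (hτ : 0 < τ)
      exact mul_nonpos_of_nonneg_of_nonpos (inv_nonneg.2 hτ.le) (hnS _ hτS)
  rw [← sub_eq_zero]
  exact norm_eq_zero.1 (pow_eq_zero_iff two_ne_zero |>.1 (le_antisymm hp (by positivity)))

theorem eq_neg_of_epigraph_subset (he : ‖e‖ = 1) (hPe : P e = 0)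
    (hf : HasFDerivAt f (0 : F →L[ℝ] ℝ) 0) (hf0 : f 0 = 0) (hV : V ∈ 𝓝 0)
    (hSV : {z ∈ V | f (P z) ≤ ⟪z, e⟫} ⊆ S) (hn : ‖n‖ = 1) (hnS : ∀ w ∈ S, ⟪w, n⟫ ≤ 0) :
    n = -e := by
  have hn_eq := eq_inner_smul_of_epigraph_subset he hPe hf hf0 hV hSV hnS
  have ha1 : ⟪e, n⟫ = -1 := by
    have := congrArg norm hn_eq
    rw [hn, norm_smul, he, mul_one, Real.norm_eq_abs,
      abs_of_nonpos (inner_nonpos_of_epigraph_subset hPe hf0 hV hSV hnS)] at this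
    linarith
  rw [hn_eq, ha1, neg_one_smul]

end EpigraphNormal

section SymmSection

variable {E : Type*} [NormedAddCommGroup E]

/-- `(-y + K) ∩ (y - K)`. -/
def symmSection (K : Set E) (y : E) : Set E := {z | y + z ∈ K ∧ y - z ∈ K}

/-- The body `K_t`. -/
def symmBody [MeasurableSpace E] (μ : Measure E) (K : Set E) (t : ℝ) : Set E :=
  {y ∈ K | ENNReal.ofReal t ≤ μ (symmSection K y)}

variable {K : Set E} {y : E}

theorem symmSection_zero_subset : symmSection K 0 ⊆ K := fun _ hz => by
  simpa using hz.1

theorem neg_mem_symmSection {z : E} (hz : z ∈ symmSection K y) : -z ∈ symmSection K y := by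
  simpa [symmSection, ← sub_eq_add_neg, and_comm] using hz

theorem ball_zero_subset_symmSection {ε : ℝ} (h : ball y ε ⊆ K) : ball 0 ε ⊆ symmSection K y :=
  fun z hz => by
    rw [mem_ball_zero_iff] at hz
    exact ⟨h (by simpa [dist_eq_norm] using hz), h (by simpa [dist_eq_norm] using hz)⟩

theorem mem_symmBody_of_ball_subset [MeasurableSpace E] {μ : Measure E} {ε t : ℝ} (hε : 0 < ε)
    (h : ball y ε ⊆ K) (ht : ENNReal.ofReal t ≤ μ (ball 0 ε)) : y ∈ symmBody μ K t :=
  ⟨h (mem_ball_self hε), ht.trans (measure_mono (ball_zero_subset_symmSection h))⟩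

section Measure

variable [MeasurableSpace E] [BorelSpace E] {μ : Measure E} [μ.IsAddHaarMeasure]

theorem measure_symmSection_lt_top (hK : IsCompact K) : μ (symmSection K y) < ⊤ :=
  calc μ (symmSection K y) ≤ μ ((y + ·) ⁻¹' K) := measure_mono fun _ hz => hz.1
    _ = μ K := measure_preimage_add μ y K
    _ < ⊤ := hK.measure_lt_top

theorem toReal_measure_symmSection_pos (hK : IsCompact K) (hy : y ∈ interior K) :
    0 < (μ (symmSection K y)).toReal := by
  obtain ⟨ε, hε, hball⟩ := isOpen_iff.1 isOpen_interior y hy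
  exact ENNReal.toReal_pos ((measure_ball_pos μ 0 hε).trans_le
    (measure_mono (ball_zero_subset_symmSection (hball.trans interior_subset)))).ne'
    (measure_symmSection_lt_top hK).ne

theorem pos_of_isGreatest_toReal_measure_symmSection {T : ℝ} (hK : IsCompact K)
    (hKi : (interior K).Nonempty)
    (hT : IsGreatest ((fun y => (μ (symmSection K y)).toReal) '' K) T) : 0 < T := by
  obtain ⟨p, hp⟩ := hKi
  exact (toReal_measure_symmSection_pos hK hp).trans_le (hT.2 ⟨p, interior_subset hp, rfl⟩)

end Measure

variable [NormedSpace ℝ E]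

theorem convex_symmSection (hK : Convex ℝ K) : Convex ℝ (symmSection K y) := by
  have hsub : (y - ·) ⁻¹' K = -((y + ·) ⁻¹' K) := by
    ext z
    simp [sub_eq_add_neg]
  have h : Convex ℝ ((y - ·) ⁻¹' K) := by
    rw [hsub]
    exact (hK.translate_preimage_right y).neg
  exact (hK.translate_preimage_right y).inter h

variable [FiniteDimensional ℝ E] [MeasurableSpace E] {μ : Measure E} [μ.IsAddHaarMeasure]

theorem Convex.interior_nonempty_of_measure_pos [BorelSpace E] {s : Set E} (hs : Convex ℝ s)
    (h : 0 < μ s) : (interior s).Nonempty := by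
  by_contra hempty
  rw [not_nonempty_iff_eq_empty] at hempty
  have : s ⊆ frontier s := by
    simpa [closure_eq_interior_union_frontier, hempty] using subset_closure (s := s)
  exact h.ne' (measure_mono_null this (hs.addHaar_frontier μ))

theorem Convex.zero_mem_interior_of_measure_symmSection_pos [BorelSpace E] (hK : Convex ℝ K)
    (h : 0 < μ (symmSection K 0)) : (0 : E) ∈ interior K := by
  obtain ⟨q, hq⟩ := (convex_symmSection hK).interior_nonempty_of_measure_pos h
  have h0 := (convex_symmSection hK).combo_interior_closure_mem_interior hq
    (subset_closure (neg_mem_symmSection (interior_subset hq))) (by norm_num : (0 : ℝ) < 1 / 2)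
    (by norm_num : (0 : ℝ) ≤ 1 / 2) (by norm_num)
  rw [smul_neg, add_neg_cancel] at h0
  exact interior_mono symmSection_zero_subset h0

theorem eventually_subset_interior_symmBody {L : Set E} (hL : IsCompact L)
    (hLK : L ⊆ interior K) : ∀ᶠ t in 𝓝 0, L ⊆ interior (symmBody μ K t) := by
  obtain ⟨δ, hδ, hthick⟩ := hL.exists_thickening_subset_open isOpen_interior hLK
  have hδ2 : 0 < δ / 2 := half_pos hδ
  filter_upwards [Iio_mem_nhds (ENNReal.toReal_pos (measure_ball_pos μ (0 : E) hδ2).ne'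
    measure_ball_lt_top.ne)] with t ht
  refine (self_subset_thickening hδ2 L).trans (interior_maximal (fun z hz => ?_) isOpen_thickening)
  refine mem_symmBody_of_ball_subset hδ2 (fun w hw => interior_subset (hthick ?_))
    (ENNReal.ofReal_le_of_le_toReal ht.le)
  have := thickening_thickening_subset (δ / 2) (δ / 2) L (ball_subset_thickening hz _ hw)
  rwa [add_halves] at this

end SymmSection

theorem Convex.segment_subset_insert_interior {E : Type*} [NormedAddCommGroup E]
    [NormedSpace ℝ E] {K : Set E} (hK : Convex ℝ K) {a b : E} (ha : a ∈ interior K)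
    (hb : b ∈ closure K) : segment ℝ a b ⊆ insert b (interior K) := by
  rw [← insert_endpoints_openSegment]
  rintro z (rfl | rfl | hz)
  · exact Or.inr ha
  · exact Or.inl rfl
  · exact Or.inr (hK.openSegment_interior_closure_subset_interior ha hb hz)

section Limits

variable {E : Type*} [NormedAddCommGroup E] [InnerProductSpace ℝ E] {K : Set E} {x : E}

theorem inner_pos_of_forall_inner_sub_nonpos {n : E} (h0 : (0 : E) ∈ interior K) (hn : n ≠ 0)
    (h : ∀ y ∈ K, ⟪y - x, n⟫ ≤ 0) : 0 < ⟪x, n⟫ := by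
  obtain ⟨τ, hτK, hτ⟩ := (((tendsto_smul_const_nhdsGT_zero n).eventually
    (mem_interior_iff_mem_nhds.1 h0)).and self_mem_nhdsWithin).exists
  have := h _ hτK
  rw [inner_sub_left, real_inner_smul_left, real_inner_self_eq_norm_sq] at this
  have : 0 < τ * ‖n‖ ^ 2 := mul_pos hτ (by positivity)
  linarith

variable [FiniteDimensional ℝ E] [MeasurableSpace E] {μ : Measure E} [μ.IsAddHaarMeasure]
  {l : Filter ℝ}

theorem tendsto_of_mem_frontier_symmBody_inter_segment (hK : Convex ℝ K) (h0 : (0 : E) ∈ interior K)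
    (hx : x ∈ closure K) {xt : ℝ → E} (hl : l ≤ 𝓝 0)
    (hxt : ∀ᶠ t in l, xt t ∈ frontier (symmBody μ K t) ∩ segment ℝ 0 x) :
    Tendsto xt l (𝓝 x) := by
  refine (nhds_basis_opens x).tendsto_right_iff.2 fun U ⟨hxU, hU⟩ => ?_
  have hcpt : IsCompact (segment ℝ 0 x \ U) := by
    rw [← convexHull_pair (𝕜 := ℝ)]
    exact ((toFinite _).isCompact_convexHull (𝕜 := ℝ)).diff hU
  have hsub : segment ℝ 0 x \ U ⊆ interior K := fun z ⟨hz, hzU⟩ =>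
    (hK.segment_subset_insert_interior h0 hx hz).resolve_left fun hzx => hzU (hzx ▸ hxU)
  filter_upwards [hl (eventually_subset_interior_symmBody (μ := μ) hcpt hsub), hxt]
    with t ht ⟨hfr, hseg⟩
  by_contra hU'
  exact hfr.2 (ht ⟨hseg, hU'⟩)

theorem inner_sub_nonpos_of_mapClusterPt (hK : Convex ℝ K) (hKi : (interior K).Nonempty)
    {xt N : ℝ → E} (hl : l ≤ 𝓝 0) (hxt : Tendsto xt l (𝓝 x))
    (hN : ∀ᶠ t in l, ∀ y ∈ symmBody μ K t, ⟪y - xt t, N t⟫ ≤ 0) {n : E}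
    (hn : MapClusterPt n l N) : ∀ y ∈ K, ⟪y - x, n⟫ ≤ 0 := by
  obtain ⟨U, hUl, hNU⟩ := mapClusterPt_iff_ultrafilter.1 hn
  have hint : interior K ⊆ {y | ⟪y - x, n⟫ ≤ 0} := fun y hy => by
    have hyt : ∀ᶠ t in l, y ∈ symmBody μ K t :=
      Eventually.mono (hl (eventually_subset_interior_symmBody isCompact_singleton
        (singleton_subset_iff.2 hy))) fun t ht => interior_subset (ht rfl)
    exact le_of_tendsto ((tendsto_const_nhds.sub (hxt.mono_left hUl)).inner hNU)
      (hUl (hN.and hyt |>.mono fun t ht => ht.1 y ht.2))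
  have hclosed : IsClosed {y | ⟪y - x, n⟫ ≤ 0} := isClosed_le (by fun_prop) continuous_const
  intro y hy
  exact closure_minimal hint hclosed (hK.closure_interior_eq_closure_of_nonempty_interior hKi ▸
    subset_closure hy)

theorem tendsto_of_unique_normal (hK : Convex ℝ K) (hKi : (interior K).Nonempty)
    {xt N : ℝ → E} (hl : l ≤ 𝓝 0) (hxt : Tendsto xt l (𝓝 x)) (hNnorm : ∀ᶠ t in l, ‖N t‖ = 1)
    (hN : ∀ᶠ t in l, ∀ y ∈ symmBody μ K t, ⟪y - xt t, N t⟫ ≤ 0) {n₀ : E}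
    (hunique : ∀ n, ‖n‖ = 1 → (∀ y ∈ K, ⟪y - x, n⟫ ≤ 0) → n = n₀) : Tendsto N l (𝓝 n₀) :=
  (isCompact_sphere 0 1).tendsto_nhds_of_unique_mapClusterPt
    (hNnorm.mono fun t ht => by simpa using ht) fun n hn hcl =>
      hunique n (by simpa using hn) (inner_sub_nonpos_of_mapClusterPt hK hKi hl hxt hN hcl)

end Limits

def initCoordsₗ (d : ℕ) : EuclideanSpace ℝ (Fin d) →ₗ[ℝ] EuclideanSpace ℝ (Fin (d - 1)) :=
  (WithLp.linearEquiv 2 ℝ (Fin (d - 1) → ℝ)).symm.toLinearMap ∘ₗ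
    LinearMap.funLeft ℝ ℝ (Fin.castLE (Nat.sub_le d 1)) ∘ₗ
    (WithLp.linearEquiv 2 ℝ (Fin d → ℝ)).toLinearMap

theorem initCoordsₗ_single_last {d : ℕ} (hd : 0 < d) :
    initCoordsₗ d (EuclideanSpace.single ⟨d - 1, by omega⟩ 1) = 0 := by
  ext i
  simp [initCoordsₗ, Fin.ext_iff, i.isLt.ne]

theorem eq_of_forall_inner_sub_nonpos_of_epigraph {d : ℕ} (hd : 0 < d)
    {K : Set (EuclideanSpace ℝ (Fin d))} {x : EuclideanSpace ℝ (Fin d)}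
    (g : EuclideanSpace ℝ (Fin d) ≃ᵃⁱ[ℝ] EuclideanSpace ℝ (Fin d)) (hgx : g x = 0)
    {f : EuclideanSpace ℝ (Fin (d - 1)) → ℝ} (hf : HasFDerivAt f (0 : _ →L[ℝ] ℝ) 0)
    (hf0 : f 0 = 0) {V : Set (EuclideanSpace ℝ (Fin d))} (hV : V ∈ 𝓝 0)
    (hgraph : {z ∈ V | f (initCoordsₗ d z) ≤ z ⟨d - 1, by omega⟩} ⊆ g '' K)
    {n n' : EuclideanSpace ℝ (Fin d)} (hn : ‖n‖ = 1) (hn' : ‖n'‖ = 1)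
    (hnK : ∀ y ∈ K, ⟪y - x, n⟫ ≤ 0) (hn'K : ∀ y ∈ K, ⟪y - x, n'⟫ ≤ 0) : n = n' := by
  set e := EuclideanSpace.single (⟨d - 1, by omega⟩ : Fin d) (1 : ℝ)
  have key : ∀ m, ‖m‖ = 1 → (∀ y ∈ K, ⟪y - x, m⟫ ≤ 0) → g.linearIsometryEquiv m = -e :=
    fun m hm hmK => eq_neg_of_epigraph_subset (by simp [e])
      (initCoordsₗ_single_last hd) hf hf0 hV
      (fun z ⟨hz, hfz⟩ => hgraph ⟨hz, by
        rw [EuclideanSpace.inner_single_right] at hfz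
        simpa using hfz⟩) (by simpa using hm) <| by
        rintro _ ⟨y, hy, rfl⟩
        rw [← sub_zero (g y), ← hgx, ← vsub_eq_sub, ← g.map_vsub,
          LinearIsometryEquiv.inner_map_map]
        exact hmK y hy
  exact g.linearIsometryEquiv.injective ((key n hn hnK).trans (key n' hn' hn'K).symm)

/-- Lemma 18 (i): let `K ⊂ ℝ^d` be a convex body, `x ∈ ∂K` a point where `∂K` is twice
differentiable in the generalized sense. With `K_T` at the origin and `x_t` the point of
`∂K_t` on `[0,x]`, one has `lim_{t→0⁺} ⟨x, N(x)⟩ / ⟨x_t, N(x_t)⟩ = 1`. -/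
theorem stmt_13 (d : ℕ) (hd : 2 ≤ d) (K : Set (EuclideanSpace ℝ (Fin d)))
    (hK : IsCompact K) (hKc : Convex ℝ K) (hKi : (interior K).Nonempty)
    (C : EuclideanSpace ℝ (Fin d) → Set (EuclideanSpace ℝ (Fin d)))
    (hC : ∀ y, C y = {z : EuclideanSpace ℝ (Fin d) | y + z ∈ K ∧ y - z ∈ K})
    (T : ℝ) (hT : IsGreatest ((fun y => (volume (C y)).toReal) '' K) T)
    (Kt : ℝ → Set (EuclideanSpace ℝ (Fin d)))
    (hKt : ∀ t, Kt t = {y ∈ K | ENNReal.ofReal t ≤ volume (C y)})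
    -- the point `K_T` is the origin
    (hw : {y ∈ K | (volume (C y)).toReal = T} = {0})
    (x : EuclideanSpace ℝ (Fin d)) (hx : x ∈ frontier K)
    -- `∂K` is twice differentiable in the generalized sense at `x`: after a rigid motion
    -- `g` moving `x` to `0`, `K` is locally the epigraph of a convex function `f` with a
    -- generalized second differential `A` at `0`
    (g : EuclideanSpace ℝ (Fin d) ≃ᵃⁱ[ℝ] EuclideanSpace ℝ (Fin d)) (hgx : g x = 0)
    (proj : EuclideanSpace ℝ (Fin d) → EuclideanSpace ℝ (Fin (d - 1)))
    (hproj : ∀ z, proj z = (WithLp.equiv 2 (Fin (d - 1) → ℝ)).symm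
      (fun i => z ⟨i, by omega⟩))
    (f : EuclideanSpace ℝ (Fin (d - 1)) → ℝ) (hf : ConvexOn ℝ Set.univ f)
    (hf0 : f 0 = 0) (hdf0 : SubgradAt f 0 0)
    (A : EuclideanSpace ℝ (Fin (d - 1)) →L[ℝ] EuclideanSpace ℝ (Fin (d - 1)))
    (hA : HasGenSecondDerivAtZero f A)
    (hgraph : ∃ V ∈ nhds (0 : EuclideanSpace ℝ (Fin d)),
      (⇑g '' K) ∩ V = {z ∈ V | f (proj z) ≤ z ⟨d - 1, by omega⟩})
    -- `N(x)` is the outer unit normal to `K` at `x`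
    (Nx : EuclideanSpace ℝ (Fin d)) (hNx : ‖Nx‖ = 1)
    (hNx' : ∀ y ∈ K, (inner ℝ (y - x) Nx : ℝ) ≤ 0)
    -- `x_t` is the unique point of `∂K_t` on `[0,x]`, with outer unit normal `N t`
    (xt : ℝ → EuclideanSpace ℝ (Fin d))
    (hxt : ∀ t ∈ Set.Icc (0 : ℝ) T, xt t ∈ frontier (Kt t) ∩ segment ℝ 0 x)
    (N : ℝ → EuclideanSpace ℝ (Fin d))
    (hN : ∀ t ∈ Set.Icc (0 : ℝ) T,
      ‖N t‖ = 1 ∧ ∀ y ∈ Kt t, (inner ℝ (y - xt t) (N t) : ℝ) ≤ 0) :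
    Filter.Tendsto
      (fun t : ℝ => (inner ℝ x Nx : ℝ) / (inner ℝ (xt t) (N t) : ℝ))
      (nhdsWithin 0 (Set.Ioi 0)) (nhds 1) := by
  obtain rfl : C = symmSection K := funext hC
  obtain rfl : Kt = symmBody volume K := funext hKt
  obtain rfl : proj = initCoordsₗ d := funext fun z => by rw [hproj]; rfl
  obtain ⟨V, hV, hgV⟩ := hgraph
  have hT0 : 0 < T := pos_of_isGreatest_toReal_measure_symmSection hK hKi hT
  have h0T : (0 : EuclideanSpace ℝ (Fin d)) ∈ K ∧ (volume (symmSection K 0)).toReal = T :=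
    hw.symm.subset rfl
  have h0 : (0 : EuclideanSpace ℝ (Fin d)) ∈ interior K :=
    hKc.zero_mem_interior_of_measure_symmSection_pos (ENNReal.toReal_pos_iff.1 (h0T.2 ▸ hT0)).1
  have hIcc : ∀ᶠ t in 𝓝[>] (0 : ℝ), t ∈ Icc 0 T :=
    mem_of_superset (Ioc_mem_nhdsGT hT0) Ioc_subset_Icc_self
  have hxt_lim : Tendsto xt (𝓝[>] 0) (𝓝 x) :=
    tendsto_of_mem_frontier_symmBody_inter_segment hKc h0 (frontier_subset_closure hx)
      nhdsWithin_le_nhds (hIcc.mono hxt)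
  have hN_lim : Tendsto N (𝓝[>] 0) (𝓝 Nx) :=
    tendsto_of_unique_normal hKc ⟨0, h0⟩ nhdsWithin_le_nhds hxt_lim
      (hIcc.mono fun t ht => (hN t ht).1) (hIcc.mono fun t ht => (hN t ht).2)
      fun n hn hnK => eq_of_forall_inner_sub_nonpos_of_epigraph (by omega) g hgx
        (hA.hasFDerivAt_zero hf hf0 hdf0) hf0 hV (hgV ▸ inter_subset_left) hn hNx hnK hNx'
  have hpos : 0 < ⟪x, Nx⟫ :=
    inner_pos_of_forall_inner_sub_nonpos h0 (norm_ne_zero_iff.1 (hNx ▸ one_ne_zero)) hNx'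
  have := (tendsto_const_nhds (x := ⟪x, Nx⟫)).div (hxt_lim.inner hN_lim) hpos.ne'
  rwa [div_self hpos.ne'] at this
end

section
/- For each integer d ≥ 2 and fixed i with 0 ≤ i ≤ d-1, the function s ↦ s^i (1-s)^{n-i} on [0,1] attains its maximum at s = i/n (for n ≥ i ≥ 1), and for n ≥ 2d and c ≥ d with c/n ≥ i/n one has C(n,i)(c/n)^i (1-c/n)^{n-i} ≤ c^d e^{-c/2}; hence Σ_{i=0}^{d-1} C(n,i)(c/n)^i(1-c/n)^{n-i} ≤ d·c^d·e^{-c/2}. -/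
/-!
The maximum of `s ↦ s ^ i * (1 - s) ^ (n - i)` is located by weighted AM-GM: with
`a = i / n`, the numbers `s / a` (weight `i`) and `(1 - s) / (1 - a)` (weight `n - i`) have
weighted mean `1`. For the tail bound, `C(n, i) (c / n) ^ i ≤ c ^ i ≤ c ^ d` because `c ≥ 1`,
and `(1 - c / n) ^ (n - i) ≤ exp (-c (n - i) / n) ≤ exp (-c / 2)` because `2 i ≤ n`.
-/

open Real

lemma pow_mul_pow_le_weighted_mean_pow {x y : ℝ} (hx : 0 ≤ x) (hy : 0 ≤ y) {p q : ℕ}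
    (hpq : 0 < p + q) :
    x ^ p * y ^ q ≤ ((p * x + q * y) / (p + q)) ^ (p + q) := by
  have hN : (0 : ℝ) < p + q := by exact_mod_cast hpq
  have hamgm :
      x ^ ((p : ℝ) / (p + q)) * y ^ ((q : ℝ) / (p + q)) ≤ (p * x + q * y) / (p + q) := by
    convert geom_mean_le_arith_mean2_weighted (w₁ := p / (p + q)) (w₂ := q / (p + q))
      (by positivity) (by positivity) hx hy (by field_simp) using 1
    field_simp
  calc x ^ p * y ^ q
      = (x ^ ((p : ℝ) / (p + q)) * y ^ ((q : ℝ) / (p + q))) ^ (p + q) := by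
        rw [mul_pow, ← rpow_mul_natCast hx, ← rpow_mul_natCast hy]
        push_cast
        rw [div_mul_cancel₀ _ hN.ne', div_mul_cancel₀ _ hN.ne', rpow_natCast, rpow_natCast]
    _ ≤ ((p * x + q * y) / (p + q)) ^ (p + q) := by gcongr

lemma pow_mul_one_sub_pow_le_of_pos_of_lt {n i : ℕ} (hi : 0 < i) (hin : i < n) {s : ℝ}
    (hs0 : 0 ≤ s) (hs1 : s ≤ 1) :
    s ^ i * (1 - s) ^ (n - i) ≤ ((i : ℝ) / n) ^ i * (1 - (i : ℝ) / n) ^ (n - i) := by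
  set a : ℝ := i / n with ha
  have hn : (0 : ℝ) < n := by exact_mod_cast hi.trans hin
  have ha0 : 0 < a := by positivity
  have ha1 : 0 < 1 - a := by
    rw [ha, sub_pos, div_lt_one hn]
    exact_mod_cast hin
  have hcast : ((n - i : ℕ) : ℝ) = n - i := by push_cast [hin.le]; ring
  have hni : (n : ℝ) - i ≠ 0 := by
    rw [sub_ne_zero]
    exact_mod_cast hin.ne'
  have hmean :
      (i * (s / a) + ((n - i : ℕ) : ℝ) * ((1 - s) / (1 - a))) / (i + (n - i : ℕ)) = 1 := by
    rw [hcast, ha]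
    field_simp [hn.ne']
    ring
  have key := pow_mul_pow_le_weighted_mean_pow (div_nonneg hs0 ha0.le)
    (div_nonneg (sub_nonneg.2 hs1) ha1.le) (p := i) (q := n - i) (by omega)
  rw [hmean, one_pow, div_pow s, div_pow (1 - s), div_mul_div_comm,
    div_le_one (by positivity)] at key
  exact key

lemma pow_mul_one_sub_pow_le {n i : ℕ} (hin : i ≤ n) {s : ℝ} (hs0 : 0 ≤ s) (hs1 : s ≤ 1) :
    s ^ i * (1 - s) ^ (n - i) ≤ ((i : ℝ) / n) ^ i * (1 - (i : ℝ) / n) ^ (n - i) := by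
  rcases Nat.eq_zero_or_pos i with rfl | hi
  · simpa using pow_le_one₀ (sub_nonneg.2 hs1) (by linarith)
  rcases hin.eq_or_lt with rfl | hin
  · have hi : (i : ℝ) ≠ 0 := by positivity
    simpa [hi] using pow_le_one₀ hs0 hs1
  exact pow_mul_one_sub_pow_le_of_pos_of_lt hi hin hs0 hs1

lemma choose_mul_div_pow_le_pow (n i : ℕ) {c : ℝ} (hc : 0 ≤ c) :
    (n.choose i : ℝ) * (c / n) ^ i ≤ c ^ i := by
  rcases Nat.eq_zero_or_pos n with rfl | hn
  · rcases Nat.eq_zero_or_pos i with rfl | hi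
    · simp
    · simp [Nat.choose_eq_zero_of_lt hi, hc]
  calc (n.choose i : ℝ) * (c / n) ^ i
      ≤ (n : ℝ) ^ i * (c / n) ^ i := by gcongr; exact_mod_cast Nat.choose_le_pow n i
    _ = c ^ i := by rw [← mul_pow, mul_div_cancel₀ _ (by positivity)]

lemma one_sub_div_pow_sub_le_exp_neg_half {n i : ℕ} (hi : 2 * i ≤ n) {c : ℝ} (hc : 0 ≤ c)
    (hcn : c ≤ n) :
    (1 - c / n) ^ (n - i) ≤ exp (-c / 2) := by
  rcases Nat.eq_zero_or_pos n with rfl | hn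
  · simp [le_antisymm (by simpa using hcn) hc]
  have hn : (0 : ℝ) < n := by exact_mod_cast hn
  have hni : (n : ℝ) ≤ 2 * ((n - i : ℕ) : ℝ) := by
    push_cast [(by omega : i ≤ n)]
    have : (2 * i : ℝ) ≤ n := by exact_mod_cast hi
    linarith
  calc (1 - c / n) ^ (n - i)
      ≤ exp (-(c / n)) ^ (n - i) := by
        gcongr
        · rw [sub_nonneg, div_le_one hn]; exact hcn
        · exact one_sub_le_exp_neg _
    _ = exp (-(((n - i : ℕ) : ℝ) * c / n)) := by rw [← exp_nat_mul]; ring_nf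
    _ ≤ exp (-c / 2) := by
        gcongr
        rw [neg_div, neg_le_neg_iff, le_div_iff₀ hn]
        nlinarith

lemma choose_mul_pow_mul_one_sub_pow_le {n i d : ℕ} (hid : i ≤ d) (hi : 2 * i ≤ n) {c : ℝ}
    (hc : 1 ≤ c) (hcn : c ≤ n) :
    (n.choose i : ℝ) * (c / n) ^ i * (1 - c / n) ^ (n - i) ≤ c ^ d * exp (-c / 2) := by
  have hc0 : 0 ≤ c := zero_le_one.trans hc
  gcongr
  · exact pow_nonneg (sub_nonneg.2 (div_le_one_of_le₀ hcn n.cast_nonneg)) _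
  · exact (choose_mul_div_pow_le_pow n i hc0).trans (pow_le_pow_right₀ hc hid)
  · exact one_sub_div_pow_sub_le_exp_neg_half hi hc0 hcn

/-- For `d ≥ 2`, `0 ≤ i ≤ d-1`: the function `s ↦ s^i (1-s)^{n-i}` on `[0,1]` attains its
maximum at `s = i/n` (for `n ≥ i ≥ 1`); and for `n ≥ 2d`, `d ≤ c ≤ n` with `c/n ≥ i/n` one has
`C(n,i)(c/n)^i(1-c/n)^{n-i} ≤ c^d e^{-c/2}`, hence
`Σ_{i=0}^{d-1} C(n,i)(c/n)^i(1-c/n)^{n-i} ≤ d·c^d·e^{-c/2}`. -/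
theorem stmt_19 (d : ℕ) (hd : 2 ≤ d) :
    (∀ n i : ℕ, 1 ≤ i → i ≤ d - 1 → i ≤ n → ∀ s ∈ Set.Icc (0 : ℝ) 1,
      s ^ i * (1 - s) ^ (n - i) ≤
        ((i : ℝ) / n) ^ i * (1 - (i : ℝ) / n) ^ (n - i)) ∧
    (∀ n : ℕ, ∀ c : ℝ, 2 * d ≤ n → (d : ℝ) ≤ c → c ≤ n →
      (∀ i : ℕ, i ≤ d - 1 →
        (n.choose i : ℝ) * (c / n) ^ i * (1 - c / n) ^ (n - i) ≤
          c ^ d * Real.exp (-c / 2)) ∧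
      ∑ i ∈ Finset.range d,
          (n.choose i : ℝ) * (c / n) ^ i * (1 - c / n) ^ (n - i) ≤
        (d : ℝ) * c ^ d * Real.exp (-c / 2)) := by
  refine ⟨fun n i _ _ hin s hs ↦ pow_mul_one_sub_pow_le hin hs.1 hs.2, ?_⟩
  intro n c hn hdc hcn
  have hc : 1 ≤ c := le_trans (by exact_mod_cast (by omega : 1 ≤ d)) hdc
  have hterm : ∀ i : ℕ, i ≤ d - 1 →
      (n.choose i : ℝ) * (c / n) ^ i * (1 - c / n) ^ (n - i) ≤ c ^ d * exp (-c / 2) :=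
    fun i hi ↦ choose_mul_pow_mul_one_sub_pow_le (d := d) (by omega) (by omega) hc hcn
  refine ⟨hterm, ?_⟩
  calc ∑ i ∈ Finset.range d, (n.choose i : ℝ) * (c / n) ^ i * (1 - c / n) ^ (n - i)
      ≤ (Finset.range d).card • (c ^ d * exp (-c / 2)) :=
        Finset.sum_le_card_nsmul _ _ _ fun i hi ↦ hterm i (by rw [Finset.mem_range] at hi; omega)
    _ = d * c ^ d * exp (-c / 2) := by rw [Finset.card_range, nsmul_eq_mul, mul_assoc]
end
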